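/- arXiv:1409.6324 — 4 statements merged into one kernel-verified Lean document; each statement's English description precedes it below -/
import Mathlib

section
/- If G is a connected graph, then any set S ⊆ G × (0,1) with a stairwell structure of odd height separates G × {0} from G × {1} in G × [0,1]. -/
open Set Topology

/-- A subset of a space is *regular* if it is closed and has finitely many connected
components, each of which is non-degenerate. -/
def IsRegularSet {G : Type*} [TopologicalSpace G] (A : Set G) : Prop :=
  IsClosed A ∧ {C : Set G | ∃ x ∈ A, C = connectedComponentIn A x}.Finite ∧
    ∀ x ∈ A, (connectedComponentIn A x).Nontrivial

/-- A point of a graph is *ordinary* (neither a branch point nor an endpoint) if it has an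
open neighborhood homeomorphic to an open interval. -/
def IsOrdinaryPoint {G : Type*} [TopologicalSpace G] (x : G) : Prop :=
  ∃ U : Set G, IsOpen U ∧ x ∈ U ∧ Nonempty (U ≃ₜ Set.Ioo (0 : ℝ) 1)

/-- A topological space is a *graph* if it is a finite union of arcs which intersect
at most in endpoints. -/
def IsGraphSpace (G : Type*) [TopologicalSpace G] : Prop :=
  ∃ (n : ℕ) (f : Fin n → unitInterval → G),
    (∀ i, Continuous (f i) ∧ Function.Injective (f i)) ∧
    (⋃ i, Set.range (f i)) = Set.univ ∧
    ∀ i j, i ≠ j →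
      Set.range (f i) ∩ Set.range (f j) ⊆ ({f i 0, f i 1} : Set G) ∩ {f j 0, f j 1}

/-- A subset of a space is a *graph* if it is a finite union of arcs which intersect
at most in endpoints. -/
def IsGraphSet {E : Type*} [TopologicalSpace E] (G : Set E) : Prop :=
  ∃ (n : ℕ) (f : Fin n → unitInterval → E),
    (∀ i, Continuous (f i) ∧ Function.Injective (f i)) ∧
    G = ⋃ i, Set.range (f i) ∧
    ∀ i j, i ≠ j →
      Set.range (f i) ∩ Set.range (f j) ⊆ ({f i 0, f i 1} : Set E) ∩ {f j 0, f j 1}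

/-- `φ` restricted to `A` is a homeomorphism onto `B`. -/
def MapsHomeoOnto {F G : Type*} [TopologicalSpace F] [TopologicalSpace G]
    (φ : F → G) (A : Set F) (B : Set G) : Prop :=
  φ '' A = B ∧ Topology.IsEmbedding (A.restrict φ)

/-- A *simple fold* on `G`, with pieces `F1, F2, F3` of `F` and projection `φ : F → G`,
satisfying properties (F1)-(F5). -/
def IsSimpleFold {F G : Type*} [TopologicalSpace F] [TopologicalSpace G]
    (φ : F → G) (F1 F2 F3 : Set F) : Prop :=
  Continuous φ ∧ F1 ∪ F2 ∪ F3 = Set.univ ∧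
  -- (F1)
  ((φ '' F1).Nonempty ∧ (φ '' F2).Nonempty ∧ (φ '' F3).Nonempty) ∧
  (IsRegularSet (φ '' F1) ∧ IsRegularSet (φ '' F2) ∧ IsRegularSet (φ '' F3)) ∧
  -- (F2)
  (φ '' F1) ∪ (φ '' F3) = Set.univ ∧ (φ '' F2) = (φ '' F1) ∩ (φ '' F3) ∧
  -- (F3)
  closure ((φ '' F1) \ (φ '' F2)) ∩ closure ((φ '' F3) \ (φ '' F2)) = ∅ ∧
  -- (F4)
  (MapsHomeoOnto φ F1 (φ '' F1) ∧ MapsHomeoOnto φ F2 (φ '' F2) ∧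
    MapsHomeoOnto φ F3 (φ '' F3)) ∧
  -- (F5)
  frontier (φ '' F1) = φ '' (F1 ∩ F2) ∧ frontier (φ '' F3) = φ '' (F2 ∩ F3) ∧
  F1 ∩ F3 = ∅

/-- `S` separates `A` from `B` within `Y`: the complement `Y \ S` is the union of two
disjoint sets, relatively open in `Y \ S`, containing `A` and `B` respectively. -/
def SeparatesWithin {E : Type*} [TopologicalSpace E] (Y S A B : Set E) : Prop :=
  ∃ U V : Set E,
    U ∪ V = Y \ S ∧ U ∩ V = ∅ ∧ A ⊆ U ∧ B ⊆ V ∧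
    (∃ U', IsOpen U' ∧ U = (Y \ S) ∩ U') ∧ (∃ V', IsOpen V' ∧ V = (Y \ S) ∩ V')

/-- `A` has *consistent complement relative to* `B`: for each component `C` of the
complement of `A`, either `∂C ⊆ B` or `∂C ∩ B = ∅`. -/
def ConsistentComplement {G : Type*} [TopologicalSpace G] (A B : Set G) : Prop :=
  ∀ x ∉ A, frontier (connectedComponentIn Aᶜ x) ⊆ B ∨
    frontier (connectedComponentIn Aᶜ x) ∩ B = ∅

/-- The *`A` side of `B`*, `σ_B(A)`: the closure of the union of all components of
`G \ B` meeting `A`. -/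
def sideOf {G : Type*} [TopologicalSpace G] (B A : Set G) : Set G :=
  closure (⋃ x ∈ {x : G | x ∉ B ∧ (connectedComponentIn Bᶜ x ∩ A).Nonempty},
    connectedComponentIn Bᶜ x)

/-- A subset of `G × [0,1]` is *straight* if it is closed, the projection is injective on
it, and its projection is regular. -/
def IsStraight {G : Type*} [TopologicalSpace G] (S : Set (G × unitInterval)) : Prop :=
  IsClosed S ∧ Set.InjOn Prod.fst S ∧ IsRegularSet (Prod.fst '' S)

/-- The *end set* of a straight set. -/
def endSet {G : Type*} [TopologicalSpace G] (S : Set (G × unitInterval)) :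
    Set (G × unitInterval) :=
  S ∩ Prod.fst ⁻¹' (frontier (Prod.fst '' S))

/-- A *stairwell structure* of height `k` for `S ⊆ G × [0,1]`, given by the pieces
`Sp 1, …, Sp k` with end set decompositions `E(Sp i) = α i ∪ β i`. -/
def IsStairwell {G : Type*} [TopologicalSpace G]
    (Sp α β : ℕ → Set (G × unitInterval)) (k : ℕ) (S : Set (G × unitInterval)) : Prop :=
  1 ≤ k ∧
  -- (S1)
  (∀ i ∈ Set.Icc 1 k, (Sp i).Nonempty ∧ IsStraight (Sp i)) ∧
  S = ⋃ i ∈ Set.Icc 1 k, Sp i ∧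
  -- (S2)
  (∀ i ∈ Set.Icc 1 k, endSet (Sp i) = α i ∪ β i ∧ α i ∩ β i = ∅ ∧
    (α i).Finite ∧ (β i).Finite) ∧
  α 1 = ∅ ∧ β k = ∅ ∧ (∀ i, 1 ≤ i → i < k → β i = α (i + 1)) ∧
  -- (S3)
  (∀ i, 1 ≤ i → i < k → ∃ V : Set G, IsOpen V ∧ Prod.fst '' β i ⊆ V ∧
    Prod.fst '' Sp i ∩ V = Prod.fst '' Sp (i + 1) ∩ V) ∧
  -- (S4)
  (∀ i ∈ Set.Icc 1 k, ConsistentComplement (Prod.fst '' Sp i) (Prod.fst '' α i) ∧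
    ConsistentComplement (Prod.fst '' Sp i) (Prod.fst '' β i)) ∧
  -- (S5)
  (∀ i ∈ Set.Icc 2 k, ∀ p ∈ α i, IsOrdinaryPoint p.1) ∧
  (∀ i j, 2 ≤ i → i < j → j ≤ k → Prod.fst '' α i ∩ Prod.fst '' α j = ∅)

/-- A *broken stairwell structure* of height `k` with a pit at level `i0`. -/
def IsBrokenStairwell {G : Type*} [TopologicalSpace G]
    (Sp α β : ℕ → Set (G × unitInterval)) (γ P1 P2 : Set (G × unitInterval))
    (k i0 : ℕ) (S : Set (G × unitInterval)) : Prop :=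
  1 ≤ k ∧ 1 ≤ i0 ∧ i0 ≤ k ∧
  -- (S1')
  (∀ i ∈ Set.Icc 1 k, (Sp i).Nonempty ∧ IsStraight (Sp i)) ∧
  P1.Nonempty ∧ IsStraight P1 ∧ P2.Nonempty ∧ IsStraight P2 ∧
  S = (⋃ i ∈ Set.Icc 1 k, Sp i) ∪ P1 ∪ P2 ∧
  -- (S2')
  (∀ i ∈ Set.Icc 1 k, i ≠ i0 → endSet (Sp i) = α i ∪ β i) ∧
  endSet (Sp i0) = α i0 ∪ β i0 ∪ γ ∧
  (∀ i ∈ Set.Icc 1 k, α i ∩ β i = ∅ ∧ (α i).Finite ∧ (β i).Finite) ∧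
  γ.Finite ∧ α i0 ∩ γ = ∅ ∧ β i0 ∩ γ = ∅ ∧
  α 1 = ∅ ∧ β k = ∅ ∧ (∀ i, 1 ≤ i → i < k → β i = α (i + 1)) ∧
  endSet P2 = endSet P1 ∪ γ ∧ endSet P1 ∩ γ = ∅ ∧
  -- (S3')
  (∀ i, 1 ≤ i → i < k → ∃ V : Set G, IsOpen V ∧ Prod.fst '' β i ⊆ V ∧
    Prod.fst '' Sp i ∩ V = Prod.fst '' Sp (i + 1) ∩ V) ∧
  (∃ V : Set G, IsOpen V ∧ Prod.fst '' endSet P1 ⊆ V ∧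
    Prod.fst '' P1 ∩ V = Prod.fst '' P2 ∩ V) ∧
  (∃ W : Set G, IsOpen W ∧ Prod.fst '' γ ⊆ W ∧
    Prod.fst '' P2 ∩ W = Prod.fst '' Sp i0 ∩ W) ∧
  -- (S4')
  (∀ i ∈ Set.Icc 1 k, ConsistentComplement (Prod.fst '' Sp i) (Prod.fst '' α i) ∧
    ConsistentComplement (Prod.fst '' Sp i) (Prod.fst '' β i)) ∧
  ConsistentComplement (Prod.fst '' Sp i0) (Prod.fst '' γ) ∧
  ConsistentComplement (Prod.fst '' P2) (Prod.fst '' endSet P1) ∧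
  ConsistentComplement (Prod.fst '' P2) (Prod.fst '' γ) ∧
  -- (S5')
  (∀ i ∈ Set.Icc 2 k, ∀ p ∈ α i, IsOrdinaryPoint p.1) ∧
  (∀ p ∈ endSet P1, IsOrdinaryPoint p.1) ∧ (∀ p ∈ γ, IsOrdinaryPoint p.1) ∧
  (∀ i j, 2 ≤ i → i < j → j ≤ k → Prod.fst '' α i ∩ Prod.fst '' α j = ∅) ∧
  (∀ i ∈ Set.Icc 2 k, Prod.fst '' α i ∩ Prod.fst '' endSet P1 = ∅ ∧
    Prod.fst '' α i ∩ Prod.fst '' γ = ∅) ∧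
  Prod.fst '' endSet P1 ∩ Prod.fst '' γ = ∅ ∧
  -- (S6')
  Prod.fst '' α i0 ∩ Prod.fst '' (P1 ∪ P2) = ∅

/-- A compactum is *hereditarily indecomposable* if every non-degenerate subcontinuum is
indecomposable, i.e. is not the union of two proper subcontinua. -/
def HereditarilyIndecomposable (X : Type*) [TopologicalSpace X] : Prop :=
  ∀ K : Set X, IsCompact K → IsConnected K → K.Nontrivial →
    ¬ ∃ A B : Set X, IsCompact A ∧ IsConnected A ∧ IsCompact B ∧ IsConnected B ∧
      A ∪ B = K ∧ A ≠ K ∧ B ≠ K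

/-- A continuum is *arc-like* if for every `ε > 0` it admits an `ε`-map onto `[0,1]`. -/
def ArcLike (X : Type*) [MetricSpace X] : Prop :=
  ∀ ε > (0 : ℝ), ∃ f : X → unitInterval, Continuous f ∧ Function.Surjective f ∧
    ∀ y, Metric.diam (f ⁻¹' {y}) < ε

/-- A continuum has *span zero* if every subcontinuum `Z ⊆ X × X` with
`π₁(Z) ⊆ π₂(Z)` meets the diagonal. -/
def SpanZero (X : Type*) [TopologicalSpace X] : Prop :=
  ∀ Z : Set (X × X), IsCompact Z → IsConnected Z →
    Prod.fst '' Z ⊆ Prod.snd '' Z → ∃ x, (x, x) ∈ Z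

/-!
Count, modulo 2, the pieces lying strictly above a point of `G × [0,1]`. Off `S` this parity is
locally constant: it can only change across a piece, or over a frontier point of the shadow
`π(Sᵢ)` of a piece, and by genericity such a point is a joint `π(βᵢ)`, where `Sᵢ` and `Sᵢ₊₁` meet
and have the same shadow nearby, so that their two contributions change together. At the top the
count is `0`. At the bottom it is the number of shadows containing the point. The complement of
`π(Sᵢ)` splits into its `α`-side and its `β`-side, and since `G` is connected the `β`-side of
`π(Sᵢ)` is the `α`-side of `π(Sᵢ₊₁)` (they agree near the joint). The sides therefore telescope,
and every point of `G` lies in `k ≡ 1` shadows modulo 2.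
-/

open Filter

instance (priority := 100) OrderTopology.locallyConnectedSpace {α : Type*}
    [ConditionallyCompleteLinearOrder α] [DenselyOrdered α] [TopologicalSpace α]
    [OrderTopology α] : LocallyConnectedSpace α := by
  refine locallyConnectedSpace_iff_connected_subsets.2 fun x U hU => ?_
  obtain ⟨a, b, -, hab, habU⟩ := exists_Icc_mem_subset_of_mem_nhds hU
  exact ⟨Icc a b, hab, isPreconnected_Icc, habU⟩

theorem exists_isPreconnected_mem_nhdsWithin_range {G : Type*} [TopologicalSpace G] [T2Space G]
    {f : unitInterval → G} (hf : Continuous f) (hinj : Function.Injective f) {x : G} {U : Set G}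
    (hU : U ∈ 𝓝 x) : ∃ V ∈ 𝓝[range f] x, IsPreconnected V ∧ x ∈ V ∧ V ⊆ U := by
  by_cases hx : x ∈ range f
  · obtain ⟨p, rfl⟩ := hx
    obtain ⟨T, hT, hTc, hTU⟩ :=
      locallyConnectedSpace_iff_connected_subsets.1 inferInstance p _ (hf.continuousAt hU)
    refine ⟨f '' T, ?_, hTc.image f hf.continuousOn, mem_image_of_mem f (mem_of_mem_nhds hT),
      image_subset_iff.2 hTU⟩
    rw [← (hf.isClosedEmbedding hinj).isInducing.map_nhds_eq]
    exact image_mem_map hT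
  · have hcl : x ∉ closure (range f) := by
      rwa [(isCompact_range hf).isClosed.closure_eq]
    refine ⟨{x}, by simp [notMem_closure_iff_nhdsWithin_eq_bot.1 hcl], isPreconnected_singleton,
      rfl, singleton_subset_iff.2 (mem_of_mem_nhds hU)⟩

theorem IsGraphSpace.locallyConnectedSpace {G : Type*} [TopologicalSpace G] [T2Space G]
    (hG : IsGraphSpace G) : LocallyConnectedSpace G := by
  obtain ⟨n, f, hf, hcov, -⟩ := hG
  refine locallyConnectedSpace_iff_connected_subsets.2 fun x U hU => ?_
  choose V hV hVc hxV hVU using fun j =>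
    exists_isPreconnected_mem_nhdsWithin_range (hf j).1 (hf j).2 hU
  refine ⟨⋃ j, V j, ?_, isPreconnected_iUnion ⟨x, mem_iInter.2 hxV⟩ hVc, iUnion_subset hVU⟩
  rw [← nhdsWithin_univ, ← hcov, nhdsWithin_iUnion, mem_iSup]
  exact fun j => mem_of_superset (hV j) (subset_iUnion V j)

theorem eventually_mem_iff_of_notMem_frontier {X : Type*} [TopologicalSpace X] {s : Set X}
    {x : X} (hx : x ∉ frontier s) : ∀ᶠ y in 𝓝 x, (y ∈ s ↔ x ∈ s) := by
  rw [← mem_compl_iff, compl_frontier_eq_union_interior] at hx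
  rcases hx with hx | hx
  · filter_upwards [isOpen_interior.mem_nhds hx] with y hy
    exact iff_of_true (interior_subset hy) (interior_subset hx)
  · filter_upwards [isOpen_interior.mem_nhds hx] with y hy
    exact iff_of_false (interior_subset hy) (interior_subset hx)

theorem eq_of_eventuallyEq_of_mem_frontier {X : Type*} [TopologicalSpace X] [PreconnectedSpace X]
    {s t : Set X} (h : ∀ x ∈ frontier s ∪ frontier t, s =ᶠ[𝓝 x] t) {x₀ : X}
    (h₀ : x₀ ∈ s ↔ x₀ ∈ t) : s = t := by
  have hloc : IsLocallyConstant fun x => (x ∈ s ↔ x ∈ t) := by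
    refine (IsLocallyConstant.iff_eventually_eq _).2 fun x => ?_
    by_cases hx : x ∈ frontier s ∪ frontier t
    · filter_upwards [eventuallyEq_set.1 (h x hx)] with y hy
      simp only [hy, (eventuallyEq_set.1 (h x hx)).self_of_nhds]
    · rw [mem_union, not_or] at hx
      filter_upwards [eventually_mem_iff_of_notMem_frontier hx.1,
        eventually_mem_iff_of_notMem_frontier hx.2] with y hys hyt
      rw [hys, hyt]
  ext x
  simpa [h₀] using hloc.apply_eq_of_isPreconnected isPreconnected_univ (mem_univ x) (mem_univ x₀)

theorem separatesWithin_univ_of_eventually_eq {X Y : Type*} [TopologicalSpace X]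
    {S A B : Set X} (f : X → Y) (c : Y) (hS : IsClosed S)
    (hf : ∀ q ∉ S, ∀ᶠ r in 𝓝 q, f r = f q) (hA : ∀ a ∈ A, a ∉ S ∧ f a = c)
    (hB : ∀ b ∈ B, b ∉ S ∧ f b ≠ c) : SeparatesWithin univ S A B := by
  have hopen : ∀ p : Y → Prop, IsOpen {q | q ∉ S ∧ p (f q)} := fun p =>
    isOpen_iff_mem_nhds.2 fun q hq => by
      filter_upwards [hS.isOpen_compl.mem_nhds hq.1, hf q hq.1] with r hr hrq
      exact ⟨hr, hrq ▸ hq.2⟩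
  refine ⟨{q | q ∉ S ∧ f q = c}, {q | q ∉ S ∧ f q ≠ c}, ?_, ?_, hA, hB,
    ⟨_, hopen (· = c), ?_⟩, ⟨_, hopen (· ≠ c), ?_⟩⟩
  · ext q
    simp only [mem_union, mem_ofPred_eq, Set.mem_sdiff, mem_univ, true_and]
    tauto
  · ext q
    simp only [mem_inter_iff, mem_ofPred_eq, mem_empty_iff_false, iff_false]
    tauto
  all_goals
    ext q
    simp only [mem_inter_iff, Set.mem_sdiff, mem_univ, true_and, mem_ofPred_eq]
    tauto

theorem Finset.sum_Icc_sub_of_eq_succ {M : Type*} [AddCommGroup M] {u v : ℕ → M} {k : ℕ}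
    (hk : 1 ≤ k) (h : ∀ i, 1 ≤ i → i < k → v i = u (i + 1)) :
    ∑ i ∈ Finset.Icc 1 k, (v i - u i) = v k - u 1 := by
  induction k, hk using Nat.le_induction with
  | base => simp
  | succ n hn ih =>
    rw [Finset.sum_Icc_succ_top (by omega), ih fun i hi hin => h i hi (by omega),
      h n hn (by omega)]
    abel

theorem eventually_sum_eq_of_eventually_add_eq {ι X M : Type*} [AddCommMonoid M] [DecidableEq ι]
    {l : Filter X} {s : Finset ι} {f : ι → X → M} {i j : ι} {q : X} (hi : i ∈ s) (hj : j ∈ s)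
    (hij : i ≠ j) (hpair : ∀ᶠ r in l, f i r + f j r = f i q + f j q)
    (hrest : ∀ n ∈ s, n ≠ i → n ≠ j → ∀ᶠ r in l, f n r = f n q) :
    ∀ᶠ r in l, ∑ n ∈ s, f n r = ∑ n ∈ s, f n q := by
  have hsplit : ∀ r, ∑ n ∈ s, f n r = f i r + f j r + ∑ n ∈ (s.erase i).erase j, f n r := by
    intro r
    rw [add_assoc, Finset.add_sum_erase _ (fun n => f n r) (Finset.mem_erase.2 ⟨hij.symm, hj⟩),
      Finset.add_sum_erase _ (fun n => f n r) hi]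
  have hrest' : ∀ᶠ r in l, ∀ n ∈ (s.erase i).erase j, f n r = f n q := by
    refine (eventually_all_finset _).2 fun n hn => ?_
    simp only [Finset.mem_erase] at hn
    exact hrest n hn.2.2 hn.2.1 hn.1
  filter_upwards [hpair, hrest'] with r hr hr'
  rw [hsplit, hsplit q, hr, Finset.sum_congr rfl hr']

theorem indicator_one_add_indicator_one_eq_zero_of_iff {X : Type*} {s t : Set X} {x : X}
    (h : x ∈ s ↔ x ∈ t) : s.indicator (1 : X → ZMod 2) x + t.indicator 1 x = 0 := by
  by_cases hx : x ∈ s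
  · simp [hx, h.1 hx]
    decide
  · simp [hx, mt h.2 hx]

section ComplementSides

variable {G : Type*} [TopologicalSpace G] {A P Q : Set G} {x : G}

def complSide (A Q : Set G) : Set G :=
  {x | x ∉ A ∧ frontier (connectedComponentIn Aᶜ x) ⊆ Q}

theorem closure_connectedComponentIn_inter_subset (F : Set G) (x : G) :
    closure (connectedComponentIn F x) ∩ F ⊆ connectedComponentIn F x := by
  rintro z ⟨hzcl, hzF⟩
  rcases (connectedComponentIn F x).eq_empty_or_nonempty with hC | ⟨w, hw⟩
  · simp [hC] at hzcl
  have hpre : IsPreconnected (insert z (connectedComponentIn F x)) :=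
    isPreconnected_connectedComponentIn.subset_closure (subset_insert _ _)
      (insert_subset hzcl subset_closure)
  rw [connectedComponentIn_eq hw]
  exact hpre.subset_connectedComponentIn (mem_insert_of_mem z hw)
    (insert_subset hzF (connectedComponentIn_eq hw ▸ connectedComponentIn_subset F x))
    (mem_insert z _)

theorem nonempty_frontier_connectedComponentIn_compl [PreconnectedSpace G] (hA : A.Nonempty)
    (hx : x ∉ A) : (frontier (connectedComponentIn Aᶜ x)).Nonempty := by
  rw [nonempty_iff_ne_empty, Ne, ← isClopen_iff_frontier_eq_empty]
  intro hC
  obtain ⟨a, ha⟩ := hA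
  have := hC.eq_univ ⟨x, mem_connectedComponentIn hx⟩ ▸ mem_univ a
  exact connectedComponentIn_subset _ _ this ha

theorem complSide_empty [PreconnectedSpace G] (hA : A.Nonempty) : complSide A ∅ = ∅ :=
  eq_empty_of_forall_notMem fun _ hx =>
    (nonempty_frontier_connectedComponentIn_compl hA hx.1).ne_empty (subset_empty_iff.1 hx.2)

theorem disjoint_complSide [PreconnectedSpace G] (hA : A.Nonempty) (hPQ : Disjoint P Q) :
    Disjoint (complSide A P) (complSide A Q) := by
  refine disjoint_left.2 fun x hxP hxQ => ?_
  obtain ⟨z, hz⟩ := nonempty_frontier_connectedComponentIn_compl hA hxP.1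
  exact disjoint_left.1 hPQ (hxP.2 hz) (hxQ.2 hz)

variable [LocallyConnectedSpace G]

theorem frontier_connectedComponentIn_compl_subset (hA : IsClosed A) :
    frontier (connectedComponentIn Aᶜ x) ⊆ frontier A := by
  rw [hA.isOpen_compl.connectedComponentIn.frontier_eq, frontier_eq_closure_inter_closure,
    hA.closure_eq]
  rintro z ⟨hzcl, hzC⟩
  refine ⟨?_, closure_mono (connectedComponentIn_subset _ _) hzcl⟩
  by_contra hzA
  exact hzC (closure_connectedComponentIn_inter_subset _ _ ⟨hzcl, hzA⟩)

theorem isOpen_complSide (hA : IsClosed A) : IsOpen (complSide A Q) := by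
  refine isOpen_iff_forall_mem_open.2 fun x hx =>
    ⟨connectedComponentIn Aᶜ x, fun y hy => ?_, hA.isOpen_compl.connectedComponentIn,
      mem_connectedComponentIn hx.1⟩
  exact ⟨connectedComponentIn_subset _ _ hy, connectedComponentIn_eq hy ▸ hx.2⟩

theorem compl_subset_complSide_union [PreconnectedSpace G] (hA : IsClosed A) (hAne : A.Nonempty)
    (hfr : frontier A ⊆ P ∪ Q) (hP : ConsistentComplement A P) (hQ : ConsistentComplement A Q) :
    Aᶜ ⊆ complSide A P ∪ complSide A Q := by
  intro x hx
  rcases hP x hx with hxP | hxP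
  · exact Or.inl ⟨hx, hxP⟩
  rcases hQ x hx with hxQ | hxQ
  · exact Or.inr ⟨hx, hxQ⟩
  obtain ⟨z, hz⟩ := nonempty_frontier_connectedComponentIn_compl hAne hx
  rcases hfr (frontier_connectedComponentIn_compl_subset hA hz) with hzP | hzQ
  · exact absurd (mem_inter hz hzP) (hxP ▸ notMem_empty z)
  · exact absurd (mem_inter hz hzQ) (hxQ ▸ notMem_empty z)

theorem indicator_add_indicator_complSide_add_indicator_complSide [PreconnectedSpace G]
    (hA : IsClosed A) (hAne : A.Nonempty) (hfr : frontier A ⊆ P ∪ Q) (hPQ : Disjoint P Q)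
    (hP : ConsistentComplement A P) (hQ : ConsistentComplement A Q) (x : G) :
    A.indicator 1 x + (complSide A P).indicator 1 x + (complSide A Q).indicator 1 x =
      (1 : ZMod 2) := by
  by_cases hxA : x ∈ A
  · simp [hxA, complSide]
  rcases compl_subset_complSide_union hA hAne hfr hP hQ hxA with hxP | hxQ
  · simp [hxA, hxP, disjoint_left.1 (disjoint_complSide hAne hPQ) hxP]
  · simp [hxA, hxQ, disjoint_right.1 (disjoint_complSide hAne hPQ) hxQ]

variable [T1Space G]

theorem eventually_mem_frontier_connectedComponentIn_compl (hA : IsClosed A)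
    (hfin : (frontier A).Finite) (hx : x ∈ A) :
    ∀ᶠ y in 𝓝 x, y ∉ A → x ∈ frontier (connectedComponentIn Aᶜ y) := by
  have hO : IsOpen (frontier A \ {x})ᶜ := (hfin.subset sdiff_subset).isClosed.isOpen_compl
  obtain ⟨N, hNO, hNo, hxN, hNc⟩ :=
    locallyConnectedSpace_iff_subsets_isOpen_isConnected.1 ‹_› x _ (hO.mem_nhds (by simp))
  filter_upwards [hNo.mem_nhds hxN] with y hyN hyA
  set C := connectedComponentIn Aᶜ y
  have hCo : IsOpen C := hA.isOpen_compl.connectedComponentIn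
  rw [hCo.frontier_eq]
  refine ⟨?_, fun hxC => connectedComponentIn_subset _ _ hxC hx⟩
  by_contra hxC
  -- Otherwise `N`, which meets `frontier C ⊆ frontier A` only at `x`, would be split by the open
  -- sets `C` and `(closure C)ᶜ`.
  have hsplit : N ⊆ C ∪ (closure C)ᶜ := by
    intro z hz
    by_cases hzC : z ∈ C
    · exact Or.inl hzC
    refine Or.inr fun hzcl => ?_
    have hzA : z ∈ frontier A := frontier_connectedComponentIn_compl_subset hA
      (show z ∈ frontier C from hCo.frontier_eq ▸ ⟨hzcl, hzC⟩)
    have hzx : z = x := by simpa [hzA] using hNO hz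
    exact hxC (hzx ▸ hzcl)
  obtain ⟨z, -, hzC, hzC'⟩ := hNc.isPreconnected C _ hCo isClosed_closure.isOpen_compl hsplit
    ⟨y, hyN, mem_connectedComponentIn hyA⟩ ⟨x, hxN, hxC⟩
  exact hzC' (subset_closure hzC)

theorem frontier_complSide_subset (hA : IsClosed A) (hfin : (frontier A).Finite) :
    frontier (complSide A Q) ⊆ Q := by
  intro x hx
  rw [(isOpen_complSide hA).frontier_eq] at hx
  obtain ⟨hxcl, hxS⟩ := hx
  by_cases hxA : x ∈ A
  · obtain ⟨y, hyS, hyx⟩ := ((mem_closure_iff_frequently.1 hxcl).and_eventually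
      (eventually_mem_frontier_connectedComponentIn_compl hA hfin hxA)).exists
    exact hyS.2 (hyx hyS.1)
  · obtain ⟨y, hyC, hyS⟩ := mem_closure_iff.1 hxcl _ hA.isOpen_compl.connectedComponentIn
      (mem_connectedComponentIn hxA)
    exact absurd ⟨hxA, connectedComponentIn_eq hyC ▸ hyS.2⟩ hxS

theorem complSide_eventuallyEq_compl (hA : IsClosed A) (hfin : (frontier A).Finite)
    (hcc : ConsistentComplement A Q) (hxQ : x ∈ Q) (hxA : x ∈ A) :
    complSide A Q =ᶠ[𝓝 x] Aᶜ := by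
  refine eventuallyEq_set.2 ?_
  filter_upwards [eventually_mem_frontier_connectedComponentIn_compl hA hfin hxA] with y hy
  refine ⟨fun h => h.1, fun hyA => ⟨hyA, ?_⟩⟩
  refine (hcc y hyA).resolve_right fun hdisj => ?_
  exact (hdisj ▸ notMem_empty x) ⟨hy hyA, hxQ⟩

theorem complSide_eq_of_eventuallyEq [PreconnectedSpace G] {A' : Set G} (hA : IsClosed A)
    (hA' : IsClosed A') (hfin : (frontier A).Finite) (hfin' : (frontier A').Finite)
    (hAne : A.Nonempty) (hAne' : A'.Nonempty) (hQA : Q ⊆ A) (hQA' : Q ⊆ A')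
    (hcc : ConsistentComplement A Q) (hcc' : ConsistentComplement A' Q)
    (heq : ∀ x ∈ Q, A =ᶠ[𝓝 x] A') : complSide A Q = complSide A' Q := by
  rcases Q.eq_empty_or_nonempty with rfl | ⟨x₀, hx₀⟩
  · rw [complSide_empty hAne, complSide_empty hAne']
  refine eq_of_eventuallyEq_of_mem_frontier (fun x hx => ?_)
    (x₀ := x₀) (iff_of_false (fun h => h.1 (hQA hx₀)) (fun h => h.1 (hQA' hx₀)))
  have hxQ : x ∈ Q := hx.elim (fun h => frontier_complSide_subset hA hfin h)
    (fun h => frontier_complSide_subset hA' hfin' h)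
  exact (complSide_eventuallyEq_compl hA hfin hcc hxQ (hQA hxQ)).trans
    ((heq x hxQ).compl.trans (complSide_eventuallyEq_compl hA' hfin' hcc' hxQ (hQA' hxQ)).symm)

end ComplementSides

section Below

variable {G : Type*} {T T' : Set (G × unitInterval)} {q : G × unitInterval} {x : G}
  {s t : unitInterval}

def below (T : Set (G × unitInterval)) : Set (G × unitInterval) :=
  {q | ∃ u, (q.1, u) ∈ T ∧ q.2 < u}

def weakBelow (T : Set (G × unitInterval)) : Set (G × unitInterval) :=
  {q | ∃ u, (q.1, u) ∈ T ∧ q.2 ≤ u}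

def weakAbove (T : Set (G × unitInterval)) : Set (G × unitInterval) :=
  {q | ∃ u, (q.1, u) ∈ T ∧ u ≤ q.2}

theorem below_subset_weakBelow : below T ⊆ weakBelow T :=
  fun _ ⟨u, hu, h⟩ => ⟨u, hu, h.le⟩

theorem mem_below_iff_of_notMem_weakAbove (hq : q ∉ weakAbove T) :
    q ∈ below T ↔ q.1 ∈ Prod.fst '' T := by
  refine ⟨fun ⟨u, hu, _⟩ => ⟨_, hu, rfl⟩, fun ⟨⟨x, u⟩, hu, hx⟩ => ?_⟩
  subst hx
  exact ⟨u, hu, lt_of_not_ge fun h => hq ⟨u, hu, h⟩⟩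

theorem mk_notMem_weakAbove (hinj : InjOn Prod.fst T) (ht : (x, t) ∈ T) (hst : s < t) :
    (x, s) ∉ weakAbove T := by
  rintro ⟨u, hu, hus⟩
  obtain rfl : u = t := congrArg Prod.snd (hinj hu ht rfl)
  exact hus.not_gt hst

theorem mk_notMem_weakBelow (hinj : InjOn Prod.fst T) (ht : (x, t) ∈ T) (hts : t < s) :
    (x, s) ∉ weakBelow T := by
  rintro ⟨u, hu, hsu⟩
  obtain rfl : u = t := congrArg Prod.snd (hinj hu ht rfl)
  exact hsu.not_gt hts

theorem mk_zero_mem_below_iff (hT : ∀ p ∈ T, p.2 ≠ 0) (x : G) :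
    ((x, 0) : G × unitInterval) ∈ below T ↔ x ∈ Prod.fst '' T := by
  refine ⟨fun ⟨u, hu, _⟩ => ⟨_, hu, rfl⟩, fun ⟨⟨y, u⟩, hu, hy⟩ => ?_⟩
  subst hy
  exact ⟨u, hu, unitInterval.pos_iff_ne_zero.2 (hT _ hu)⟩

theorem mk_one_notMem_below (x : G) : ((x, 1) : G × unitInterval) ∉ below T :=
  fun ⟨_, _, hu⟩ => hu.not_ge unitInterval.le_one'

variable [TopologicalSpace G]

theorem isClosed_setOf_exists_mem {r : unitInterval → unitInterval → Prop}
    (hr : IsClosed {p : unitInterval × unitInterval | r p.1 p.2}) (hT : IsClosed T) :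
    IsClosed {q : G × unitInterval | ∃ u, (q.1, u) ∈ T ∧ r q.2 u} := by
  have himage : {q : G × unitInterval | ∃ u, (q.1, u) ∈ T ∧ r q.2 u} =
      Prod.fst '' {z : (G × unitInterval) × unitInterval | (z.1.1, z.2) ∈ T ∧ r z.1.2 z.2} := by
    ext q
    simp
  rw [himage]
  exact isClosedMap_fst_of_compactSpace _
    ((hT.preimage (continuous_fst.fst.prodMk continuous_snd)).inter
      (hr.preimage (continuous_fst.snd.prodMk continuous_snd)))

theorem isClosed_weakBelow (hT : IsClosed T) : IsClosed (weakBelow T) :=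
  isClosed_setOf_exists_mem (isClosed_le continuous_fst continuous_snd) hT

theorem isClosed_weakAbove (hT : IsClosed T) : IsClosed (weakAbove T) :=
  isClosed_setOf_exists_mem (r := fun t u => u ≤ t) (isClosed_le continuous_snd continuous_fst) hT

theorem frontier_below_subset (hT : IsClosed T) (hinj : InjOn Prod.fst T) :
    frontier (below T) ⊆ T ∪ Prod.fst ⁻¹' frontier (Prod.fst '' T) := by
  intro q hq
  by_contra hq'
  rw [mem_union, not_or] at hq'
  obtain ⟨hqT, hqfr⟩ := hq'
  obtain ⟨u, hu, hqu⟩ := closure_minimal below_subset_weakBelow (isClosed_weakBelow hT) hq.1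
  have hlt : q.2 < u := hqu.lt_of_ne fun h => hqT (by rw [← h] at hu; exact hu)
  have hint : q.1 ∈ interior (Prod.fst '' T) :=
    (mem_interior_iff_notMem_frontier (mem_image_of_mem Prod.fst hu)).2 hqfr
  refine hq.2 (interior_maximal ?_ ((isOpen_interior.preimage continuous_fst).inter
    (isClosed_weakAbove hT).isOpen_compl) ⟨hint, mk_notMem_weakAbove hinj hu hlt⟩)
  exact fun r ⟨hr, hra⟩ => (mem_below_iff_of_notMem_weakAbove hra).2 (interior_subset hr)

theorem eventually_mem_below_iff (hT : IsClosed T) (hinj : InjOn Prod.fst T) (hqT : q ∉ T)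
    (hq : q.1 ∉ frontier (Prod.fst '' T)) : ∀ᶠ r in 𝓝 q, (r ∈ below T ↔ q ∈ below T) :=
  eventually_mem_iff_of_notMem_frontier fun h => (frontier_below_subset hT hinj h).elim hqT hq

theorem below_eventuallyEq_below (hT : IsClosed T) (hT' : IsClosed T') (hinj : InjOn Prod.fst T)
    (hinj' : InjOn Prod.fst T') (ht : (x, t) ∈ T) (ht' : (x, t) ∈ T') (hst : s ≠ t)
    (heq : Prod.fst '' T =ᶠ[𝓝 x] Prod.fst '' T') : below T =ᶠ[𝓝 (x, s)] below T' := by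
  refine eventuallyEq_set.2 ?_
  rcases hst.lt_or_gt with hlt | hgt
  · filter_upwards [(continuous_fst.tendsto (x, s)).eventually (eventuallyEq_set.1 heq),
      (isClosed_weakAbove hT).isOpen_compl.mem_nhds (mk_notMem_weakAbove hinj ht hlt),
      (isClosed_weakAbove hT').isOpen_compl.mem_nhds (mk_notMem_weakAbove hinj' ht' hlt)]
      with r hr h h'
    rw [mem_below_iff_of_notMem_weakAbove h, mem_below_iff_of_notMem_weakAbove h', hr]
  · filter_upwards
      [(isClosed_weakBelow hT).isOpen_compl.mem_nhds (mk_notMem_weakBelow hinj ht hgt),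
      (isClosed_weakBelow hT').isOpen_compl.mem_nhds (mk_notMem_weakBelow hinj' ht' hgt)]
      with r h h'
    exact iff_of_false (fun hr => h (below_subset_weakBelow hr))
      fun hr => h' (below_subset_weakBelow hr)

end Below

noncomputable def parityAbove {G : Type*} (Sp : ℕ → Set (G × unitInterval)) (k : ℕ)
    (q : G × unitInterval) : ZMod 2 :=
  ∑ i ∈ Finset.Icc 1 k, (below (Sp i)).indicator 1 q

namespace IsStairwell

variable {G : Type*} [TopologicalSpace G] {Sp α β : ℕ → Set (G × unitInterval)} {k : ℕ}
  {S : Set (G × unitInterval)} {i j : ℕ} {x : G}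

theorem isClosed_piece (h : IsStairwell Sp α β k S) (hi : i ∈ Icc 1 k) : IsClosed (Sp i) :=
  (h.2.1 i hi).2.1

theorem injOn_piece (h : IsStairwell Sp α β k S) (hi : i ∈ Icc 1 k) : InjOn Prod.fst (Sp i) :=
  (h.2.1 i hi).2.2.1

theorem nonempty_image_fst (h : IsStairwell Sp α β k S) (hi : i ∈ Icc 1 k) :
    (Prod.fst '' Sp i).Nonempty :=
  (h.2.1 i hi).1.image _

theorem piece_subset (h : IsStairwell Sp α β k S) (hi : i ∈ Icc 1 k) : Sp i ⊆ S :=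
  h.2.2.1 ▸ subset_biUnion_of_mem (u := Sp) hi

theorem isClosed (h : IsStairwell Sp α β k S) : IsClosed S :=
  h.2.2.1 ▸ (finite_Icc 1 k).isClosed_biUnion fun _ hi => h.isClosed_piece hi

theorem isClosed_image_fst (h : IsStairwell Sp α β k S) (hi : i ∈ Icc 1 k) :
    IsClosed (Prod.fst '' Sp i) :=
  isClosedMap_fst_of_compactSpace _ (h.isClosed_piece hi)

theorem frontier_image_fst (h : IsStairwell Sp α β k S) (hi : i ∈ Icc 1 k) :
    frontier (Prod.fst '' Sp i) = Prod.fst '' α i ∪ Prod.fst '' β i := by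
  rw [← image_union, ← (h.2.2.2.1 i hi).1, endSet, image_inter_preimage,
    inter_eq_right.2 (h.isClosed_image_fst hi).frontier_subset]

theorem finite_frontier_image_fst (h : IsStairwell Sp α β k S) (hi : i ∈ Icc 1 k) :
    (frontier (Prod.fst '' Sp i)).Finite := by
  obtain ⟨-, -, hαfin, hβfin⟩ := h.2.2.2.1 i hi
  rw [h.frontier_image_fst hi]
  exact (hαfin.image _).union (hβfin.image _)

theorem β_subset_inter (h : IsStairwell Sp α β k S) (hi : 1 ≤ i) (hik : i < k) :
    β i ⊆ Sp i ∩ Sp (i + 1) := by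
  obtain ⟨-, -, -, hS2, -, -, hβα, -⟩ := h
  intro p hp
  refine ⟨((hS2 i ⟨hi, hik.le⟩).1 ▸ Or.inr hp : p ∈ endSet (Sp i)).1, ?_⟩
  rw [hβα i hi hik] at hp
  exact ((hS2 (i + 1) ⟨by omega, hik⟩).1 ▸ Or.inl hp : p ∈ endSet (Sp (i + 1))).1

theorem eq_of_mem_image_fst_β (h : IsStairwell Sp α β k S) (hi : 1 ≤ i) (hik : i < k)
    (hj : 1 ≤ j) (hjk : j < k) (hxi : x ∈ Prod.fst '' β i) (hxj : x ∈ Prod.fst '' β j) :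
    i = j := by
  obtain ⟨-, -, -, -, -, -, hβα, -, -, -, hgen⟩ := h
  rw [hβα i hi hik] at hxi
  rw [hβα j hj hjk] at hxj
  by_contra hij
  rcases Nat.lt_or_gt_of_ne hij with hlt | hlt
  · exact (hgen (i + 1) (j + 1) (by omega) (by omega) (by omega)).subset ⟨hxi, hxj⟩
  · exact (hgen (j + 1) (i + 1) (by omega) (by omega) (by omega)).subset ⟨hxj, hxi⟩

theorem exists_joint_of_mem_frontier (h : IsStairwell Sp α β k S) (hj : j ∈ Icc 1 k)
    (hx : x ∈ frontier (Prod.fst '' Sp j)) :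
    ∃ i, 1 ≤ i ∧ i < k ∧ x ∈ Prod.fst '' β i ∧ (j = i ∨ j = i + 1) := by
  rw [h.frontier_image_fst hj] at hx
  obtain ⟨hj1, hjk⟩ := hj
  obtain ⟨-, -, -, -, hα1, hβk, hβα, -⟩ := h
  rcases hx with hxα | hxβ
  · have hj2 : j ≠ 1 := by rintro rfl; simp [hα1] at hxα
    refine ⟨j - 1, by omega, by omega, ?_, Or.inr (by omega)⟩
    rwa [hβα (j - 1) (by omega) (by omega), Nat.sub_add_cancel hj1]
  · have hjk' : j ≠ k := by rintro rfl; simp [hβk] at hxβ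
    exact ⟨j, hj1, by omega, hxβ, Or.inl rfl⟩

theorem disjoint_image_fst (h : IsStairwell Sp α β k S) (hi : i ∈ Icc 1 k) :
    Disjoint (Prod.fst '' α i) (Prod.fst '' β i) := by
  obtain ⟨hi1, hik⟩ := hi
  have ⟨_, _, _, _, hα1, hβk, hβα, _⟩ := h
  refine disjoint_left.2 fun x hxα hxβ => ?_
  have hi2 : i ≠ 1 := by rintro rfl; simp [hα1] at hxα
  have hik' : i ≠ k := by rintro rfl; simp [hβk] at hxβ
  rw [← Nat.sub_add_cancel hi1, ← hβα (i - 1) (by omega) (by omega)] at hxα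
  have := h.eq_of_mem_image_fst_β (by omega) (by omega) hi1 (by omega) hxα hxβ
  omega

theorem image_fst_eventuallyEq (h : IsStairwell Sp α β k S) (hi : 1 ≤ i) (hik : i < k)
    (hx : x ∈ Prod.fst '' β i) : Prod.fst '' Sp i =ᶠ[𝓝 x] Prod.fst '' Sp (i + 1) := by
  obtain ⟨-, -, -, -, -, -, -, hS3, -⟩ := h
  obtain ⟨V, hV, hβV, hSV⟩ := hS3 i hi hik
  refine eventuallyEq_set.2 ?_
  filter_upwards [hV.mem_nhds (hβV hx)] with y hy
  simpa only [mem_inter_iff, hy, and_true] using Set.ext_iff.1 hSV y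

theorem eventually_parityAbove_eq (h : IsStairwell Sp α β k S) {q : G × unitInterval}
    (hq : q ∉ S) : ∀ᶠ r in 𝓝 q, parityAbove Sp k r = parityAbove Sp k q := by
  have hnot : ∀ j ∈ Icc 1 k, q ∉ Sp j := fun j hj hqj => hq (h.piece_subset hj hqj)
  have hconst : ∀ j ∈ Icc 1 k, q.1 ∉ frontier (Prod.fst '' Sp j) →
      ∀ᶠ r in 𝓝 q, (below (Sp j)).indicator (1 : G × unitInterval → ZMod 2) r =
        (below (Sp j)).indicator 1 q := by
    intro j hj hqj
    filter_upwards [eventually_mem_below_iff (h.isClosed_piece hj) (h.injOn_piece hj) (hnot j hj)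
      hqj] with r hr
    classical
    simp only [indicator_apply, hr, Pi.one_apply]
  by_cases hjoint : ∃ j ∈ Icc 1 k, q.1 ∈ frontier (Prod.fst '' Sp j)
  · obtain ⟨j, hj, hqj⟩ := hjoint
    obtain ⟨i, hi, hik, ⟨⟨x, t⟩, hxt, hx⟩, -⟩ := h.exists_joint_of_mem_frontier hj hqj
    have hi' : i ∈ Icc 1 k := ⟨hi, hik.le⟩
    have hi₁ : i + 1 ∈ Icc 1 k := ⟨by omega, hik⟩
    obtain ⟨hti, hti₁⟩ := h.β_subset_inter hi hik hxt
    simp only at hx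
    subst hx
    have heq : below (Sp i) =ᶠ[𝓝 q] below (Sp (i + 1)) :=
      below_eventuallyEq_below (h.isClosed_piece hi') (h.isClosed_piece hi₁) (h.injOn_piece hi')
        (h.injOn_piece hi₁) hti hti₁ (fun hqt => hnot i hi' (by rw [← hqt] at hti; exact hti))
        (h.image_fst_eventuallyEq hi hik ⟨_, hxt, rfl⟩)
    refine eventually_sum_eq_of_eventually_add_eq (Finset.mem_Icc.2 hi') (Finset.mem_Icc.2 hi₁)
      (by omega) ?_ fun n hn hni hni₁ => hconst n (Finset.mem_Icc.1 hn) fun hqn => ?_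
    · filter_upwards [eventuallyEq_set.1 heq] with r hr
      rw [indicator_one_add_indicator_one_eq_zero_of_iff hr,
        indicator_one_add_indicator_one_eq_zero_of_iff (eventuallyEq_set.1 heq).self_of_nhds]
    · obtain ⟨i', hi', hi'k, hqi', hni'⟩ :=
        h.exists_joint_of_mem_frontier (Finset.mem_Icc.1 hn) hqn
      have := h.eq_of_mem_image_fst_β hi hik hi' hi'k ⟨_, hxt, rfl⟩ hqi'
      omega
  · simp only [not_exists, not_and] at hjoint
    filter_upwards [(eventually_all_finset _).2 fun j hj =>
      hconst j (Finset.mem_Icc.1 hj) (hjoint j (Finset.mem_Icc.1 hj))] with r hr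
    exact Finset.sum_congr rfl hr

variable [PreconnectedSpace G] [LocallyConnectedSpace G] [T1Space G]

theorem complSide_β_eq_complSide_α (h : IsStairwell Sp α β k S) (hi : 1 ≤ i) (hik : i < k) :
    complSide (Prod.fst '' Sp i) (Prod.fst '' β i) =
      complSide (Prod.fst '' Sp (i + 1)) (Prod.fst '' α (i + 1)) := by
  have ⟨_, _, _, _, _, _, hβα, _, hS4, _⟩ := h
  have hi' : i ∈ Icc 1 k := ⟨hi, hik.le⟩
  have hi₁ : i + 1 ∈ Icc 1 k := ⟨by omega, hik⟩
  rw [← hβα i hi hik]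
  exact complSide_eq_of_eventuallyEq (h.isClosed_image_fst hi') (h.isClosed_image_fst hi₁)
    (h.finite_frontier_image_fst hi') (h.finite_frontier_image_fst hi₁)
    (h.nonempty_image_fst hi') (h.nonempty_image_fst hi₁)
    (image_mono ((h.β_subset_inter hi hik).trans inter_subset_left))
    (image_mono ((h.β_subset_inter hi hik).trans inter_subset_right))
    (hS4 i hi').2 (hβα i hi hik ▸ (hS4 (i + 1) hi₁).1)
    fun _ hx => h.image_fst_eventuallyEq hi hik hx

theorem sum_indicator_image_fst (h : IsStairwell Sp α β k S) (x : G) :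
    ∑ i ∈ Finset.Icc 1 k, (Prod.fst '' Sp i).indicator (1 : G → ZMod 2) x = k := by
  have ⟨hk, _, _, _, hα1, hβk, _, _, hS4, _⟩ := h
  set a : ℕ → ZMod 2 := fun i => (complSide (Prod.fst '' Sp i) (Prod.fst '' α i)).indicator 1 x
  set b : ℕ → ZMod 2 := fun i => (complSide (Prod.fst '' Sp i) (Prod.fst '' β i)).indicator 1 x
  have hone : ∀ i ∈ Finset.Icc 1 k,
      (Prod.fst '' Sp i).indicator (1 : G → ZMod 2) x + (b i - a i) = 1 := by
    intro i hi
    have hi' : i ∈ Icc 1 k := Finset.mem_Icc.1 hi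
    rw [CharTwo.sub_eq_add, add_comm (b i), ← add_assoc]
    exact indicator_add_indicator_complSide_add_indicator_complSide (h.isClosed_image_fst hi')
      (h.nonempty_image_fst hi') (h.frontier_image_fst hi').le (h.disjoint_image_fst hi')
      (hS4 i hi').1 (hS4 i hi').2 x
  have htel : ∑ i ∈ Finset.Icc 1 k, (b i - a i) = 0 := by
    rw [Finset.sum_Icc_sub_of_eq_succ hk fun i hi hik => ?_]
    · simp [a, b, hα1, hβk, complSide_empty (h.nonempty_image_fst ⟨le_rfl, hk⟩),
        complSide_empty (h.nonempty_image_fst ⟨hk, le_rfl⟩)]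
    · simp only [a, b, h.complSide_β_eq_complSide_α hi hik]
  have hsum := Finset.sum_congr rfl hone
  rwa [Finset.sum_add_distrib, htel, add_zero, Finset.sum_const, Nat.card_Icc, nsmul_one,
    Nat.add_sub_cancel] at hsum

end IsStairwell

theorem stmt11_general (G : Type*) [TopologicalSpace G] [T2Space G]
    [ConnectedSpace G] (hG : IsGraphSpace G)
    (S : Set (G × unitInterval)) (hsub : ∀ p ∈ S, p.2 ≠ 0 ∧ p.2 ≠ 1)
    (k : ℕ) (hodd : Odd k)
    (h : ∃ Sp α β : ℕ → Set (G × unitInterval), IsStairwell Sp α β k S) :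
    SeparatesWithin Set.univ S
      (Set.univ ×ˢ ({0} : Set unitInterval)) (Set.univ ×ˢ ({1} : Set unitInterval)) := by
  obtain ⟨Sp, α, β, h⟩ := h
  have := hG.locallyConnectedSpace
  refine separatesWithin_univ_of_eventually_eq (parityAbove Sp k) 1 h.isClosed
    (fun q hq => h.eventually_parityAbove_eq hq) ?_ ?_
  · rintro ⟨x, t⟩ ⟨-, rfl : t = 0⟩
    refine ⟨fun hx => (hsub _ hx).1 rfl, ?_⟩
    rw [parityAbove, ← hodd.natCast_zmod_two, ← h.sum_indicator_image_fst x]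
    refine Finset.sum_congr rfl fun i hi => ?_
    have h0 : ∀ p ∈ Sp i, p.2 ≠ 0 :=
      fun p hp => (hsub p (h.piece_subset (Finset.mem_Icc.1 hi) hp)).1
    classical
    simp only [indicator_apply, mk_zero_mem_below_iff h0, Pi.one_apply]
  · rintro ⟨x, t⟩ ⟨-, rfl : t = 1⟩
    refine ⟨fun hx => (hsub _ hx).2 rfl, ?_⟩
    simp [parityAbove, mk_one_notMem_below]

/-- a set with a stairwell structure of odd height separates G × {0} from G × {1}. -/
theorem stmt11 (G : Type*) [TopologicalSpace G] [CompactSpace G] [T2Space G]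
    [ConnectedSpace G] (hG : IsGraphSpace G)
    (S : Set (G × unitInterval)) (hsub : ∀ p ∈ S, p.2 ≠ 0 ∧ p.2 ≠ 1)
    (k : ℕ) (hodd : Odd k)
    (h : ∃ Sp α β : ℕ → Set (G × unitInterval), IsStairwell Sp α β k S) :
    SeparatesWithin Set.univ S
      (Set.univ ×ˢ ({0} : Set unitInterval)) (Set.univ ×ˢ ({1} : Set unitInterval)) :=
  stmt11_general G hG S hsub k hodd h
end

section
/- Every set S ⊆ G × [0,1] which has a stairwell structure of height k (with k ≥ 3) has a broken stairwell structure of height k − 2 with a pit at level 1. -/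
open Set Topology

/-- a stairwell structure of height k ≥ 3 yields a broken stairwell structure
of height k − 2 with a pit at level 1. -/
theorem stmt13 (G : Type*) [TopologicalSpace G] [CompactSpace G] [T2Space G]
    (hG : IsGraphSpace G)
    (S : Set (G × unitInterval)) (Sp α β : ℕ → Set (G × unitInterval)) (k : ℕ)
    (hk : 3 ≤ k) (h : IsStairwell Sp α β k S) :
    ∃ (Sp' α' β' : ℕ → Set (G × unitInterval)) (γ P1 P2 : Set (G × unitInterval)),
      IsBrokenStairwell Sp' α' β' γ P1 P2 (k - 2) 1 S := by
  obtain ⟨hk1, hS1, hSU, hS2, hα1, hβk, hβα, hS3, hS4, hS5, hS5'⟩ := h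
  have hmem : ∀ i, 1 ≤ i → i ≤ k - 2 → (i + 2) ∈ Set.Icc 1 k := by
    intro i h1 h2; exact Set.mem_Icc.mpr ⟨by omega, by omega⟩
  have h1k : (1 : ℕ) ∈ Set.Icc 1 k := Set.mem_Icc.mpr ⟨le_rfl, by omega⟩
  have h2k : (2 : ℕ) ∈ Set.Icc 1 k := Set.mem_Icc.mpr ⟨by omega, by omega⟩
  have h3k : (3 : ℕ) ∈ Set.Icc 1 k := Set.mem_Icc.mpr ⟨by omega, by omega⟩
  have hE1 : endSet (Sp 1) = α 2 := by
    rw [(hS2 1 h1k).1, hα1, Set.empty_union, hβα 1 le_rfl (by omega)]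
  have hE2 : endSet (Sp 2) = α 2 ∪ α 3 := by
    rw [(hS2 2 h2k).1, hβα 2 (by omega) (by omega)]
  have hb2 : β 2 = α 3 := hβα 2 (by omega) (by omega)
  have h23 : Prod.fst '' α 2 ∩ Prod.fst '' α 3 = ∅ :=
    hS5' 2 3 le_rfl (by omega) (by omega)
  have h23' : α 2 ∩ α 3 = ∅ := by
    rw [Set.eq_empty_iff_forall_notMem]
    rintro p ⟨hp2, hp3⟩
    have : p.1 ∈ Prod.fst '' α 2 ∩ Prod.fst '' α 3 :=
      ⟨⟨p, hp2, rfl⟩, ⟨p, hp3, rfl⟩⟩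
    rw [h23] at this; exact this
  refine ⟨fun i => Sp (i + 2), fun i => if i = 1 then ∅ else α (i + 2),
    fun i => β (i + 2), α 3, Sp 1, Sp 2,
    by omega, le_rfl, by omega, ?_, ?_, ?_, ?_, ?_, ?_, ?_, ?_, ?_, ?_, ?_, ?_, ?_,
    ?_, ?_, ?_, ?_, ?_, ?_, ?_, ?_, ?_, ?_, ?_, ?_, ?_, ?_, ?_, ?_, ?_, ?_⟩
  · -- (S1') pieces
    intro i hi
    rw [Set.mem_Icc] at hi
    exact hS1 (i + 2) (hmem i hi.1 hi.2)
  · exact (hS1 1 h1k).1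
  · exact (hS1 1 h1k).2
  · exact (hS1 2 h2k).1
  · exact (hS1 2 h2k).2
  · -- union
    rw [hSU]; ext x
    simp only [Set.mem_iUnion, Set.mem_union, Set.mem_Icc, exists_prop]
    constructor
    · rintro ⟨i, ⟨hi1, hi2⟩, hx⟩
      rcases Nat.lt_or_ge i 3 with hi | hi
      · interval_cases i
        · exact Or.inl (Or.inr hx)
        · exact Or.inr hx
      · refine Or.inl (Or.inl ⟨i - 2, ⟨by omega, by omega⟩, ?_⟩)
        rwa [show i - 2 + 2 = i by omega]
    · rintro ((⟨i, ⟨hi1, hi2⟩, hx⟩ | hx) | hx)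
      · exact ⟨i + 2, ⟨by omega, by omega⟩, hx⟩
      · exact ⟨1, ⟨le_rfl, by omega⟩, hx⟩
      · exact ⟨2, ⟨by omega, by omega⟩, hx⟩
  · -- (S2') endsets i ≠ 1
    intro i hi hne
    rw [Set.mem_Icc] at hi
    simp only [if_neg hne]
    exact (hS2 (i + 2) (hmem i hi.1 hi.2)).1
  · -- endSet Sp' 1
    show endSet (Sp 3) = ∅ ∪ β 3 ∪ α 3
    rw [Set.empty_union, (hS2 3 h3k).1]
    exact Set.union_comm _ _
  · -- α' ∩ β' etc
    intro i hi
    rw [Set.mem_Icc] at hi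
    by_cases hne : i = 1
    · subst hne
      exact ⟨by simp, by simp, (hS2 3 h3k).2.2.2⟩
    · simp only [if_neg hne]
      exact (hS2 (i + 2) (hmem i hi.1 hi.2)).2
  · exact (hS2 3 h3k).2.2.1
  · simp
  · show β 3 ∩ α 3 = ∅
    rw [Set.inter_comm]
    exact (hS2 3 h3k).2.1
  · simp
  · show β (k - 2 + 2) = ∅
    rw [show k - 2 + 2 = k by omega]; exact hβk
  · -- β' i = α'(i+1)
    intro i hi1 hi2
    simp only [if_neg (show ¬ i + 1 = 1 by omega)]
    rw [show i + 1 + 2 = i + 2 + 1 by omega]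
    exact hβα (i + 2) (by omega) (by omega)
  · -- endSet P2 = endSet P1 ∪ γ
    rw [hE2, hE1]
  · -- endSet P1 ∩ γ = ∅
    rw [hE1]; exact h23'
  · -- (S3') steps
    intro i hi1 hi2
    obtain ⟨V, hV, hV1, hV2⟩ := hS3 (i + 2) (by omega) (by omega)
    exact ⟨V, hV, hV1, by rwa [show i + 2 + 1 = i + 1 + 2 by omega] at hV2⟩
  · -- P1 / P2 agreement
    obtain ⟨V, hV, hV1, hV2⟩ := hS3 1 le_rfl (by omega)
    refine ⟨V, hV, ?_, hV2⟩
    rw [hE1, ← hβα 1 le_rfl (by omega)]; exact hV1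
  · -- P2 / Sp' 1 agreement
    obtain ⟨W, hW, hW1, hW2⟩ := hS3 2 (by omega) (by omega)
    refine ⟨W, hW, by rwa [← hb2], ?_⟩
    show Prod.fst '' Sp 2 ∩ W = Prod.fst '' Sp 3 ∩ W
    exact hW2
  · -- (S4')
    intro i hi
    rw [Set.mem_Icc] at hi
    by_cases hne : i = 1
    · subst hne
      refine ⟨?_, (hS4 3 h3k).2⟩
      intro x hx; right; simp
    · simp only [if_neg hne]
      exact hS4 (i + 2) (hmem i hi.1 hi.2)
  · -- CC Sp' 1 γ
    show ConsistentComplement (Prod.fst '' Sp 3) (Prod.fst '' α 3)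
    exact (hS4 3 h3k).1
  · -- CC P2 endP1
    rw [hE1]
    exact (hS4 2 h2k).1
  · -- CC P2 γ
    rw [← hb2]
    exact (hS4 2 h2k).2
  · -- (S5') ordinary α'
    intro i hi p hp
    rw [Set.mem_Icc] at hi
    simp only [if_neg (show ¬ i = 1 by omega)] at hp
    exact hS5 (i + 2) (Set.mem_Icc.mpr ⟨by omega, by omega⟩) p hp
  · -- ordinary endP1
    intro p hp
    rw [hE1] at hp
    exact hS5 2 (Set.mem_Icc.mpr ⟨le_rfl, by omega⟩) p hp
  · -- ordinary γ
    intro p hp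
    exact hS5 3 (Set.mem_Icc.mpr ⟨by omega, by omega⟩) p hp
  · -- genericity α'
    intro i j hi hij hjk
    simp only [if_neg (show ¬ i = 1 by omega), if_neg (show ¬ j = 1 by omega)]
    exact hS5' (i + 2) (j + 2) (by omega) (by omega) (by omega)
  · -- α' vs endP1, γ
    intro i hi
    rw [Set.mem_Icc] at hi
    simp only [if_neg (show ¬ i = 1 by omega)]
    rw [hE1]
    constructor
    · rw [Set.inter_comm]
      exact hS5' 2 (i + 2) le_rfl (by omega) (by omega)
    · rw [Set.inter_comm]
      exact hS5' 3 (i + 2) (by omega) (by omega) (by omega)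
  · -- π endP1 ∩ π γ
    rw [hE1]; exact h23
  · -- (S6')
    simp
end

section
/- Let φ: F → G be a simple fold on a graph G with F = F₁ ∪ F₂ ∪ F₃, and let S ⊆ G × [0,1] be straight. Suppose that either ∂π(S) ∩ ∂φ(F₂) = ∅, or there is a neighborhood V of ∂π(S) ∩ ∂φ(F₂) in G with φ(F₂) ∩ V ⊆ π(S) ∩ V. Then S' = φ_⋆⁻¹(S) is straight, and its end set is E(S') = φ_⋆⁻¹(E(S)) \ (∂F₂ × [0,1]), where φ_⋆(x,t) = (φ(x),t). -/
open Set Topology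

/-!
Away from `F₁ ∩ F₂ ∪ F₂ ∩ F₃` the fold is a local homeomorphism, so near such a point `x` the
set `φ⁻¹(π S)` looks like `π S` near `φ x`: `x` is an end exactly when `φ x` is. At a point of
`F₁ ∩ F₂` over `π S`, condition (F3) makes `φ(F₁)` coincide with `φ(F₂)` near `φ x`, and the
hypothesis on `V` puts `φ(F₂)` inside `π S` there; so `φ⁻¹(π S)` is a neighbourhood of the point,
which is therefore not an end.

Regularity of `φ⁻¹(π S)` follows by compactness once every point has arbitrarily small
non-degenerate connected neighbourhoods in it. Regular subsets of a graph have them: a graph is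
rim-finite, and by boundary bumping a continuum meets a closed neighbourhood with finite frontier
in finitely many components. These pull back along the local homeomorphisms, and along the
embeddings `φ|Fᵢ` at the folding points.

Graphs are also what make `F₁ ∩ F₂` part of `∂F₂`: otherwise `∂φ(F₁)` would contain a
non-degenerate continuum, but in a graph such a set has interior.
-/

open Filter

section Continua

variable {X : Type*} [TopologicalSpace X]

lemma IsPreconnected.nontrivial_inter_isOpen [T1Space X] {K O : Set X} (hK : IsPreconnected K)
    (hnt : K.Nontrivial) (hO : IsOpen O) {x : X} (hx : x ∈ K ∩ O) : (K ∩ O).Nontrivial := by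
  by_contra hsub
  have hKO : K ∩ O ⊆ {x} := fun z hz => (not_nontrivial_iff.mp hsub) hz hx
  rcases isPreconnected_iff_subset_of_disjoint.mp hK O {x}ᶜ hO isOpen_compl_singleton
    (fun z _ => (em (z = x)).elim (fun h => Or.inl (h ▸ hx.2)) Or.inr)
    (eq_empty_of_forall_notMem fun z ⟨hzK, hzO, hzx⟩ => hzx (hKO ⟨hzK, hzO⟩)) with h | h
  · exact hnt.not_subset_singleton fun z hz => hKO ⟨hz, h hz⟩
  · exact h hx.1 rfl

lemma IsPreconnected.exists_mem_notMem_of_finite [T1Space X] {K E : Set X}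
    (hK : IsPreconnected K) (hnt : K.Nontrivial) (hE : E.Finite) : ∃ p ∈ K, p ∉ E := by
  obtain ⟨a, ha⟩ := hnt.nonempty
  have hEa : IsOpen (E \ {a})ᶜ := (hE.subset sdiff_subset).isClosed.isOpen_compl
  obtain ⟨b, ⟨hbK, hbE⟩, hba⟩ :=
    (hK.nontrivial_inter_isOpen hnt hEa ⟨ha, fun h => h.2 rfl⟩).exists_ne a
  exact ⟨b, hbK, fun h => hbE ⟨h, hba⟩⟩

lemma IsClosed.connectedComponentIn {F : Set X} (hF : IsClosed F) (x : X) :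
    IsClosed (connectedComponentIn F x) := by
  by_cases hx : x ∈ F
  · exact isClosed_of_closure_subset <| isPreconnected_connectedComponentIn.closure
      |>.subset_connectedComponentIn (subset_closure (mem_connectedComponentIn hx))
        (closure_minimal (connectedComponentIn_subset _ _) hF)
  · rw [connectedComponentIn_eq_empty hx]
    exact isClosed_empty

lemma exists_isClopen_disjoint_of_disjoint_connectedComponent [CompactSpace X] [T2Space X]
    {x : X} {C : Set X} (hC : IsClosed C) (h : Disjoint (connectedComponent x) C) :
    ∃ E, IsClopen E ∧ x ∈ E ∧ Disjoint E C := by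
  rw [connectedComponent_eq_iInter_isClopen, disjoint_iff_inter_eq_empty, inter_comm] at h
  obtain ⟨u, hu⟩ := hC.isCompact.elim_finite_subfamily_closed
    (fun s : {s : Set X // IsClopen s ∧ x ∈ s} => s.1) (fun s => s.2.1.1) h
  refine ⟨⋂ s ∈ u, s.1, isClopen_biInter_finset fun s _ => s.2.1,
    mem_iInter₂.2 fun s _ => s.2.2, ?_⟩
  rw [disjoint_iff_inter_eq_empty, inter_comm, hu]

/-- The boundary bumping theorem. -/
lemma nonempty_connectedComponentIn_inter_frontier [T2Space X] {K N : Set X}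
    (hK : IsCompact K) (hKc : IsPreconnected K) (hN : IsOpen N) (hKN : ¬K ⊆ N) {z : X}
    (hz : z ∈ K ∩ closure N) :
    (connectedComponentIn (K ∩ closure N) z ∩ frontier N).Nonempty := by
  set Z := K ∩ closure N
  have : CompactSpace Z := isCompact_iff_compactSpace.mp (hK.inter_right isClosed_closure)
  rw [connectedComponentIn_eq_image hz]
  by_contra hdisj
  obtain ⟨E, hE, hzE, hEN⟩ := exists_isClopen_disjoint_of_disjoint_connectedComponent
    (isClosed_frontier.preimage continuous_subtype_val) (x := ⟨z, hz⟩)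
    (Set.disjoint_left.2 fun w hw hwN => hdisj ⟨w, ⟨w, hw, rfl⟩, hwN⟩)
  obtain ⟨U, hU, rfl⟩ := isOpen_induced_iff.mp hE.isOpen
  have hZU : IsClosed (Z ∩ U) := by
    rw [← Subtype.image_preimage_coe]
    exact (hE.isClosed.isCompact.image continuous_subtype_val).isClosed
  have hZUN : Z ∩ U ⊆ N := fun w ⟨hwZ, hwU⟩ => by
    by_contra hwN
    exact Disjoint.notMem_of_mem_left hEN (a := (⟨w, hwZ⟩ : Z)) hwU
      (show w ∈ closure N \ interior N from ⟨hwZ.2, fun h => hwN (interior_subset h)⟩)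
  rcases isPreconnected_iff_subset_of_disjoint.mp hKc (U ∩ N) (Z ∩ U)ᶜ (hU.inter hN)
    hZU.isOpen_compl
    (fun k hk => (em (k ∈ Z ∩ U)).elim (fun h => Or.inl ⟨h.2, hZUN h⟩) Or.inr)
    (eq_empty_of_forall_notMem fun k ⟨hkK, ⟨hkU, hkN⟩, hk⟩ =>
      hk ⟨⟨hkK, subset_closure hkN⟩, hkU⟩) with h | h
  · exact hKN fun k hk => (h hk).2
  · exact h hz.1 ⟨hz, hzE⟩

lemma connectedComponentIn_inter_closure_mem_nhdsWithin [T2Space X] {K N : Set X}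
    (hK : IsCompact K) (hKc : IsPreconnected K) (hN : IsOpen N) (hfin : (frontier N).Finite)
    {x : X} (hx : x ∈ K ∩ N) : connectedComponentIn (K ∩ closure N) x ∈ 𝓝[K] x := by
  set D := K ∩ closure N
  by_cases hKN : K ⊆ N
  · exact mem_of_superset self_mem_nhdsWithin <| hKc.subset_connectedComponentIn hx.1
      fun k hk => ⟨hk, subset_closure (hKN hk)⟩
  set B := ⋃ p ∈ frontier N \ {p | x ∈ connectedComponentIn D p}, connectedComponentIn D p
  have hB : IsClosed B := (hfin.subset sdiff_subset).isClosed_biUnion fun p _ =>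
    (hK.isClosed.inter isClosed_closure).connectedComponentIn p
  have hxB : x ∉ B := by
    simp only [B, mem_iUnion, exists_prop, not_exists, not_and]
    exact fun p hp hx => hp.2 hx
  refine mem_nhdsWithin.2 ⟨N ∩ Bᶜ, hN.inter hB.isOpen_compl, ⟨hx.2, hxB⟩, ?_⟩
  rintro z ⟨⟨hzN, hzB⟩, hzK⟩
  obtain ⟨w, hwz, hwN⟩ :=
    nonempty_connectedComponentIn_inter_frontier hK hKc hN hKN ⟨hzK, subset_closure hzN⟩
  have hzw : z ∈ connectedComponentIn D w :=
    connectedComponentIn_eq hwz ▸ mem_connectedComponentIn ⟨hzK, subset_closure hzN⟩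
  by_cases hxw : x ∈ connectedComponentIn D w
  · exact connectedComponentIn_eq hxw ▸ hzw
  · exact absurd (mem_biUnion (show w ∈ frontier N \ {p | x ∈ connectedComponentIn D p} from
      ⟨hwN, hxw⟩) hzw) hzB

end Continua

section ConnectedImKleinen

variable {X Y : Type*} [TopologicalSpace X] [TopologicalSpace Y]

/-- Connected im kleinen at `x`, with the small connected neighbourhoods required to be
non-degenerate (so that `x` is not isolated in `A`). -/
def ConnectedImKleinenAt (A : Set X) (x : X) : Prop :=
  ∀ W ∈ 𝓝 x, ∃ T ⊆ A ∩ W, IsPreconnected T ∧ T.Nontrivial ∧ T ∈ 𝓝[A] x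

namespace ConnectedImKleinenAt

variable {A B : Set X} {x : X}

lemma congr (h : ConnectedImKleinenAt A x) (hAB : A =ᶠ[𝓝 x] B) : ConnectedImKleinenAt B x := by
  intro W hW
  obtain ⟨T, hTA, hT, hnt, hTx⟩ := h (W ∩ {z | A z = B z}) (inter_mem hW hAB)
  exact ⟨T, fun z hz => ⟨(hTA hz).2.2.mp (hTA hz).1, (hTA hz).2.1⟩, hT, hnt,
    nhdsWithin_eq_iff_eventuallyEq.2 hAB ▸ hTx⟩

lemma union (hA : ConnectedImKleinenAt A x) (hB : ConnectedImKleinenAt B x) (hxA : x ∈ A)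
    (hxB : x ∈ B) : ConnectedImKleinenAt (A ∪ B) x := by
  intro W hW
  obtain ⟨T, hTA, hT, hnt, hTx⟩ := hA W hW
  obtain ⟨T', hTB, hT', -, hT'x⟩ := hB W hW
  refine ⟨T ∪ T', union_subset (hTA.trans (inter_subset_inter_left _ subset_union_left))
      (hTB.trans (inter_subset_inter_left _ subset_union_right)),
    hT.union x (mem_of_mem_nhdsWithin hxA hTx) (mem_of_mem_nhdsWithin hxB hT'x) hT',
    hnt.mono subset_union_left, ?_⟩
  rw [nhdsWithin_union]
  exact union_mem_sup hTx hT'x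

lemma preimage_of_isEmbedding {φ : X → Y} {P : Set X} {A : Set Y} (hφ : Continuous φ)
    (he : IsEmbedding (P.domRestrict φ)) (hA : A ⊆ φ '' P) (hx : x ∈ P)
    (h : ConnectedImKleinenAt A (φ x)) : ConnectedImKleinenAt (P ∩ φ ⁻¹' A) x := by
  intro W hW
  have hW' : Subtype.val ⁻¹' W ∈ 𝓝 (⟨x, hx⟩ : P) :=
    continuous_subtype_val.continuousAt.preimage_mem_nhds hW
  rw [he.isInducing.nhds_eq_comap] at hW'
  obtain ⟨W', hW', hW'W⟩ := hW'
  obtain ⟨T, hTA, hT, ⟨a, ha, b, hb, hab⟩, hTx⟩ := h W' hW'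
  have hTP : T ⊆ range (P.domRestrict φ) := range_domRestrict φ P ▸ hTA.trans
    (inter_subset_left.trans hA)
  refine ⟨Subtype.val '' (P.domRestrict φ ⁻¹' T), ?_, ?_, ?_, ?_⟩
  · rintro _ ⟨z, hz, rfl⟩
    exact ⟨⟨z.2, (hTA hz).1⟩, hW'W (hTA hz).2⟩
  · refine (he.isInducing.isPreconnected_image.1 ?_).image _ continuous_subtype_val.continuousOn
    rwa [image_preimage_eq_of_subset hTP]
  · obtain ⟨p, rfl⟩ := hTP ha
    obtain ⟨q, rfl⟩ := hTP hb
    exact ⟨p, ⟨p, ha, rfl⟩, q, ⟨q, hb, rfl⟩, fun hpq => hab (congrArg _ (Subtype.ext hpq))⟩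
  · obtain ⟨O, hO, hxO, hOT⟩ := mem_nhdsWithin.1 hTx
    refine mem_nhdsWithin.2 ⟨φ ⁻¹' O, hO.preimage hφ, hxO, ?_⟩
    rintro z ⟨hzO, hzP, hzA⟩
    exact ⟨⟨z, hzP⟩, hOT ⟨hzO, hzA⟩, rfl⟩

lemma of_isEmbedding {φ : X → Y} {P : Set X} (hφ : Continuous φ)
    (he : IsEmbedding (P.domRestrict φ)) (hx : x ∈ P) (h : ConnectedImKleinenAt (φ '' P) (φ x)) :
    ConnectedImKleinenAt P x := by
  simpa [inter_eq_left.2 (subset_preimage_image φ P)] using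
    h.preimage_of_isEmbedding hφ he subset_rfl hx

lemma preimage_of_mem_nhds {φ : X → Y} {P : Set X} {A : Set Y} (hφ : Continuous φ)
    (hP : P ∈ 𝓝 x) (hφP : φ '' P ∈ 𝓝 (φ x)) (he : IsEmbedding (P.domRestrict φ))
    (h : ConnectedImKleinenAt A (φ x)) : ConnectedImKleinenAt (φ ⁻¹' A) x := by
  have hAP : (A ∩ φ '' P : Set Y) =ᶠ[𝓝 (φ x)] A :=
    inter_eventuallyEq_left.2 (mem_of_superset hφP fun _ h _ => h)
  have h' := (h.congr hAP.symm).preimage_of_isEmbedding hφ he inter_subset_right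
    (mem_of_mem_nhds hP)
  rw [preimage_inter, inter_comm (φ ⁻¹' A), ← inter_assoc,
    inter_eq_left.2 (subset_preimage_image φ P)] at h'
  exact h'.congr (inter_eventuallyEq_right.2 (mem_of_superset hP fun _ h _ => h))

end ConnectedImKleinenAt

lemma isRegularSet_of_forall_connectedImKleinenAt {A : Set X} (hA : IsClosed A)
    (hAc : IsCompact A) (h : ∀ x ∈ A, ConnectedImKleinenAt A x) : IsRegularSet A := by
  have hcomp : ∀ x ∈ A,
      connectedComponentIn A x ∈ 𝓝[A] x ∧ (connectedComponentIn A x).Nontrivial := by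
    intro x hx
    obtain ⟨T, hTA, hT, hnt, hTx⟩ := h x hx univ univ_mem
    have hTC := hT.subset_connectedComponentIn (mem_of_mem_nhdsWithin hx hTx)
      (hTA.trans inter_subset_left)
    exact ⟨mem_of_superset hTx hTC, hnt.mono hTC⟩
  refine ⟨hA, ?_, fun x hx => (hcomp x hx).2⟩
  obtain ⟨t, -, hcover⟩ := hAc.elim_nhdsWithin_subcover _ fun x hx => (hcomp x hx).1
  refine (t.finite_toSet.image fun x => connectedComponentIn A x).subset ?_
  rintro _ ⟨z, hz, rfl⟩
  obtain ⟨y, hyt, hzy⟩ := mem_iUnion₂.1 (hcover hz)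
  exact ⟨y, hyt, connectedComponentIn_eq hzy⟩

lemma IsRegularSet.connectedComponentIn_eventuallyEq {A : Set X} (hA : IsRegularSet A) (x : X) :
    connectedComponentIn A x =ᶠ[𝓝 x] A := by
  obtain ⟨hAc, hfin, -⟩ := hA
  set B := ⋃ C ∈ {C | (∃ y ∈ A, C = connectedComponentIn A y) ∧ x ∉ C}, C
  have hB : IsClosed B := (hfin.subset fun C hC => hC.1).isClosed_biUnion <| by
    rintro _ ⟨⟨y, -, rfl⟩, -⟩
    exact hAc.connectedComponentIn y
  have hxB : x ∉ B := by
    simp only [B, mem_iUnion, exists_prop, not_exists, not_and]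
    exact fun C hC hxC => hC.2 hxC
  filter_upwards [hB.isOpen_compl.mem_nhds hxB] with z hzB
  refine propext ⟨fun hz => connectedComponentIn_subset _ _ hz, fun hzA => ?_⟩
  by_contra hzx
  refine hzB (mem_biUnion (show connectedComponentIn A z ∈ _ from ⟨⟨z, hzA, rfl⟩, fun hxz => ?_⟩)
    (mem_connectedComponentIn hzA))
  exact hzx (connectedComponentIn_eq hxz ▸ mem_connectedComponentIn hzA)

end ConnectedImKleinen

section Graph

lemma unitInterval.finite_sphere (u : unitInterval) (δ : ℝ) : (Metric.sphere u δ).Finite := by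
  refine ((toFinite {(u : ℝ) - δ, (u : ℝ) + δ}).preimage Subtype.val_injective.injOn).subset
    fun v hv => ?_
  rw [Metric.mem_sphere, Subtype.dist_eq, Real.dist_eq] at hv
  simp only [mem_preimage, mem_insert_iff, mem_singleton_iff]
  rcases (abs_eq (hv ▸ abs_nonneg _)).1 hv with h | h
  · exact Or.inr (by linarith)
  · exact Or.inl (by linarith)

lemma unitInterval.finite_cthickening_sdiff_thickening {D : Set unitInterval}
    (hD : D.Subsingleton) {δ : ℝ} (hδ : 0 ≤ δ) :
    (Metric.cthickening δ D \ Metric.thickening δ D).Finite := by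
  rcases hD.eq_empty_or_singleton with rfl | ⟨u, rfl⟩
  · simp
  · rw [Metric.cthickening_singleton _ hδ, Metric.thickening_singleton,
      Metric.closedBall_sdiff_ball]
    exact unitInterval.finite_sphere u δ

lemma exists_pos_forall_cthickening_subset {ι α : Type*} [Finite ι] [PseudoEMetricSpace α]
    {D U : ι → Set α} (hD : ∀ i, IsCompact (D i)) (hU : ∀ i, IsOpen (U i))
    (hDU : ∀ i, D i ⊆ U i) : ∃ δ > 0, ∀ i, Metric.cthickening δ (D i) ⊆ U i := by
  choose δ hδ hδU using fun i => (hD i).exists_cthickening_subset_open (hU i) (hDU i)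
  obtain ⟨ε, hεU, hε⟩ := ((eventually_all.2 fun i => mem_of_superset (Ioo_mem_nhdsGT (hδ i))
    fun ε hε => (Metric.cthickening_mono hε.2.le _).trans (hδU i)).and
    (self_mem_nhdsWithin (s := Ioi (0 : ℝ)))).exists
  exact ⟨ε, hε, hεU⟩

variable {G : Type*} [TopologicalSpace G]

/-- Graphs are rim-finite: `N` is the set of points all of whose arc parameters are `δ`-close to
a parameter of `x`, for `δ` so small that no endpoint other than `x` is that close. Its frontier
consists of points at parameter distance exactly `δ`. -/
lemma IsGraphSpace.exists_isOpen_finite_frontier [T2Space G] (hG : IsGraphSpace G) {x : G}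
    {W : Set G} (hW : W ∈ 𝓝 x) : ∃ N, IsOpen N ∧ x ∈ N ∧ closure N ⊆ W ∧ (frontier N).Finite := by
  obtain ⟨n, f, hf, hcov, hint⟩ := hG
  set E : Set G := ⋃ i, {f i 0, f i 1}
  have hE : E.Finite := finite_iUnion fun i => toFinite _
  set W₀ := interior W \ (E \ {x})
  obtain ⟨δ, hδ, hδW⟩ := exists_pos_forall_cthickening_subset (D := fun i => f i ⁻¹' {x})
    (U := fun i => f i ⁻¹' W₀) (fun i => (isClosed_singleton.preimage (hf i).1).isCompact)
    (fun i => (isOpen_interior.sdiff (hE.subset sdiff_subset).isClosed).preimage (hf i).1)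
    (fun i v hv => ⟨mem_interior_iff_mem_nhds.2 (hv ▸ hW), fun h => h.2 hv⟩)
  set C := ⋃ i, f i '' (Metric.thickening δ (f i ⁻¹' {x}))ᶜ
  have hC : IsClosed C := isClosed_iUnion_of_finite fun i =>
    (Metric.isOpen_thickening.isClosed_compl.isCompact.image (hf i).1).isClosed
  have hxC : x ∉ C := by
    simp only [C, mem_iUnion, mem_image, not_exists, not_and]
    exact fun i v hv hvx => hv (Metric.self_subset_thickening hδ _ hvx)
  have hclC : closure Cᶜ ⊆ ⋃ i, f i '' Metric.cthickening δ (f i ⁻¹' {x}) := by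
    refine closure_minimal (fun z hz => ?_) (isClosed_iUnion_of_finite fun i =>
      (Metric.isClosed_cthickening.isCompact.image (hf i).1).isClosed)
    obtain ⟨i, v, rfl⟩ := mem_iUnion.1 (hcov ▸ mem_univ z)
    by_contra hv
    exact hz (mem_iUnion.2 ⟨i, v, fun hv' => hv (mem_iUnion.2
      ⟨i, v, Metric.thickening_subset_cthickening _ _ hv', rfl⟩), rfl⟩)
  refine ⟨Cᶜ, hC.isOpen_compl, hxC, hclC.trans ?_, ?_⟩
  · intro z hz
    obtain ⟨i, v, hv, rfl⟩ := mem_iUnion.1 hz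
    exact interior_subset (hδW i hv).1
  refine (finite_iUnion fun i => (unitInterval.finite_cthickening_sdiff_thickening
    ((subsingleton_singleton (a := x)).preimage (hf i).2) hδ.le).image (f i)).subset ?_
  rw [hC.isOpen_compl.frontier_eq]
  rintro z ⟨hzcl, hzC⟩
  obtain ⟨i, v, hv, rfl⟩ := mem_iUnion.1 (hclC hzcl)
  obtain ⟨j, w, hw, hwv⟩ := mem_iUnion.1 (not_not.1 hzC)
  refine mem_iUnion.2 ⟨i, v, ⟨hv, ?_⟩, rfl⟩
  by_cases hji : j = i
  · subst hji
    rwa [← (hf j).2 hwv]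
  · refine absurd ?_ hzC
    have hvx : f i v = x := by
      by_contra hne
      exact (hδW i hv).2 ⟨mem_iUnion.2 ⟨i, (hint i j (Ne.symm hji) ⟨⟨v, rfl⟩, ⟨w, hwv⟩⟩).1⟩, hne⟩
    exact hvx ▸ hxC

lemma IsGraphSpace.connectedImKleinenAt_of_isPreconnected [T2Space G] (hG : IsGraphSpace G)
    {K : Set G} (hK : IsCompact K) (hKc : IsPreconnected K) (hnt : K.Nontrivial) {x : G}
    (hx : x ∈ K) : ConnectedImKleinenAt K x := by
  intro W hW
  obtain ⟨N, hN, hxN, hNW, hfin⟩ := hG.exists_isOpen_finite_frontier hW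
  have hT := connectedComponentIn_inter_closure_mem_nhdsWithin hK hKc hN hfin ⟨hx, hxN⟩
  obtain ⟨O, hO, hxO, hOT⟩ := mem_nhdsWithin.1 hT
  exact ⟨_, (connectedComponentIn_subset _ _).trans (inter_subset_inter_right _ hNW),
    isPreconnected_connectedComponentIn,
    (hKc.nontrivial_inter_isOpen hnt hO ⟨hx, hxO⟩).mono fun z hz => hOT ⟨hz.2, hz.1⟩, hT⟩

lemma IsGraphSpace.connectedImKleinenAt [CompactSpace G] [T2Space G] (hG : IsGraphSpace G)
    {A : Set G} (hA : IsRegularSet A) {x : G} (hx : x ∈ A) : ConnectedImKleinenAt A x :=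
  (hG.connectedImKleinenAt_of_isPreconnected (hA.1.connectedComponentIn x).isCompact
    isPreconnected_connectedComponentIn (hA.2.2 x hx) (mem_connectedComponentIn hx)).congr
    (hA.connectedComponentIn_eventuallyEq x)

lemma nonempty_interior_of_isPreconnected_of_subset_range {f : unitInterval → G}
    (hf : IsEmbedding f) {V Q : Set G} (hV : IsOpen V) (hVf : V ⊆ range f) (hQV : Q ⊆ V)
    (hQ : IsPreconnected Q) (hnt : Q.Nontrivial) : (interior Q).Nonempty := by
  have hQf : Q ⊆ range f := hQV.trans hVf
  have hpre : IsPreconnected (f ⁻¹' Q) :=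
    hf.isInducing.isPreconnected_image.1 (by rwa [image_preimage_eq_of_subset hQf])
  obtain ⟨a, ha, b, hb, hab⟩ := hnt
  obtain ⟨s, rfl⟩ := hQf ha
  obtain ⟨t, rfl⟩ := hQf hb
  have hst : ∀ r, r = s ∨ r = t → r ∈ f ⁻¹' Q := by rintro r (rfl | rfl) <;> assumption
  have hIoo : Ioo (min s t) (max s t) ⊆ f ⁻¹' Q := Ioo_subset_Icc_self.trans <|
    hpre.Icc_subset (hst _ (min_choice s t)) (hst _ (max_choice s t))
  obtain ⟨r, hr⟩ := nonempty_Ioo.2 (min_lt_max.2 fun h => hab (congrArg f h))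
  obtain ⟨U, hU, hUf⟩ := hf.isInducing.isOpen_iff.1 (isOpen_Ioo (a := min s t) (b := max s t))
  refine ⟨f r, interior_maximal (t := U ∩ V) ?_ (hU.inter hV) ⟨?_, hQV (hIoo hr)⟩⟩
  · rintro z ⟨hzU, hzV⟩
    obtain ⟨r', rfl⟩ := hVf hzV
    exact hIoo (hUf ▸ hzU)
  · show r ∈ f ⁻¹' U
    rwa [hUf]

/-- Near a point off the finitely many endpoints, `closure P` is a non-degenerate connected
subset of a single arc. -/
lemma IsGraphSpace.nonempty_interior_closure [CompactSpace G] [T2Space G] (hG : IsGraphSpace G)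
    {P : Set G} (hP : IsPreconnected P) (hnt : P.Nontrivial) : (interior (closure P)).Nonempty := by
  obtain ⟨n, f, hf, hcov, hint⟩ := id hG
  set E : Set G := ⋃ i, {f i 0, f i 1}
  have hE : E.Finite := finite_iUnion fun i => toFinite _
  obtain ⟨p, hpP, hpE⟩ := hP.closure.exists_mem_notMem_of_finite (hnt.mono subset_closure) hE
  obtain ⟨i, hpi⟩ := mem_iUnion.1 (hcov ▸ mem_univ p)
  set V := (E ∪ ⋃ j ∈ ({i}ᶜ : Set (Fin n)), range (f j))ᶜ
  have hV : IsOpen V := (hE.isClosed.union ((toFinite _).isClosed_biUnion fun j _ =>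
    (isCompact_range (hf j).1).isClosed)).isOpen_compl
  have hVf : V ⊆ range (f i) := fun z hz => by
    obtain ⟨j, hj⟩ := mem_iUnion.1 (hcov ▸ mem_univ z)
    by_cases hji : j = i
    · exact hji ▸ hj
    · exact (hz (Or.inr (mem_biUnion (show j ∈ ({i}ᶜ : Set (Fin n)) from hji) hj))).elim
  have hpV : p ∈ V := by
    rintro (h | h)
    · exact hpE h
    · obtain ⟨j, hji, hj⟩ := mem_iUnion₂.1 h
      exact hpE (mem_iUnion.2 ⟨i, (hint i j (Ne.symm hji) ⟨hpi, hj⟩).1⟩)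
  obtain ⟨Q, hQ, hQc, hQnt, -⟩ := hG.connectedImKleinenAt_of_isPreconnected
    isClosed_closure.isCompact hP.closure (hnt.mono subset_closure) hpP V (hV.mem_nhds hpV)
  exact (nonempty_interior_of_isPreconnected_of_subset_range
    ((hf i).1.isClosedEmbedding (hf i).2).isEmbedding hV hVf (hQ.trans inter_subset_right) hQc
    hQnt).mono (interior_mono (hQ.trans inter_subset_left))

end Graph

section SimpleFold

variable {F G : Type*} [TopologicalSpace F] [TopologicalSpace G] {φ : F → G}

lemma isCompact_of_isEmbedding_domRestrict {s : Set F} (he : IsEmbedding (s.domRestrict φ))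
    (hs : IsCompact (φ '' s)) : IsCompact s := by
  rwa [isCompact_iff_isCompact_univ, he.isInducing.isCompact_iff, image_univ, range_domRestrict]

lemma map_nhds_eq_of_isEmbedding_domRestrict {P : Set F} {x : F} (hP : P ∈ 𝓝 x)
    (hφP : φ '' P ∈ 𝓝 (φ x)) (he : IsEmbedding (P.domRestrict φ)) : map φ (𝓝 x) = 𝓝 (φ x) := by
  rw [← map_nhds_subtype_coe_eq_nhds (mem_of_mem_nhds hP) hP, map_map,
    ← nhdsWithin_eq_nhds.2 hφP, ← range_domRestrict]
  exact he.isInducing.map_nhds_eq _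

namespace IsSimpleFold

variable {F1 F2 F3 : Set F}

lemma symm (h : IsSimpleFold φ F1 F2 F3) : IsSimpleFold φ F3 F2 F1 := by
  obtain ⟨hφ, hcov, ⟨n1, n2, n3⟩, ⟨r1, r2, r3⟩, hun, h2, hsep, ⟨e1, e2, e3⟩, hfr1, hfr3, h13⟩ := h
  refine ⟨hφ, ?_, ⟨n3, n2, n1⟩, ⟨r3, r2, r1⟩, by rwa [union_comm], by rwa [inter_comm],
    by rwa [inter_comm], ⟨e3, e2, e1⟩, by rwa [inter_comm], by rwa [inter_comm],
    by rwa [inter_comm]⟩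
  rwa [union_comm (F3 ∪ F2), union_comm F3, ← union_assoc]

lemma continuous (h : IsSimpleFold φ F1 F2 F3) : Continuous φ := h.1

lemma mem_union (h : IsSimpleFold φ F1 F2 F3) (x : F) : x ∈ F1 ∪ F2 ∪ F3 := h.2.1 ▸ mem_univ x

lemma isClosed_pieces [CompactSpace G] [T2Space F] (h : IsSimpleFold φ F1 F2 F3) :
    IsClosed F1 ∧ IsClosed F2 ∧ IsClosed F3 := by
  obtain ⟨-, -, -, ⟨r1, r2, r3⟩, -, -, -, ⟨e1, e2, e3⟩, -⟩ := h
  exact ⟨(isCompact_of_isEmbedding_domRestrict e1.2 r1.1.isCompact).isClosed,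
    (isCompact_of_isEmbedding_domRestrict e2.2 r2.1.isCompact).isClosed,
    (isCompact_of_isEmbedding_domRestrict e3.2 r3.1.isCompact).isClosed⟩

lemma frontier_subset [CompactSpace G] [T2Space F] (h : IsSimpleFold φ F1 F2 F3) :
    frontier F2 ⊆ F1 ∩ F2 ∪ F2 ∩ F3 := by
  obtain ⟨c1, c2, c3⟩ := h.isClosed_pieces
  intro x hx
  rw [frontier_eq_closure_inter_closure, c2.closure_eq] at hx
  have h13 : F2ᶜ ⊆ F1 ∪ F3 := fun z hz => by
    rcases h.mem_union z with (hz1 | hz2) | hz3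
    exacts [Or.inl hz1, absurd hz2 hz, Or.inr hz3]
  rcases closure_minimal h13 (c1.union c3) hx.2 with hx1 | hx3
  exacts [Or.inl ⟨hx1, hx.1⟩, Or.inr ⟨hx.1, hx3⟩]

lemma image_inter_subset_frontier (h : IsSimpleFold φ F1 F2 F3) :
    φ '' (F1 ∩ F2) ⊆ frontier (φ '' F2) := by
  obtain ⟨-, -, -, -, -, h2, -, -, hfr1, -⟩ := h
  rintro _ ⟨x, hx, rfl⟩
  have hx1 : φ x ∈ frontier (φ '' F1) := hfr1 ▸ mem_image_of_mem φ hx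
  rw [frontier_eq_closure_inter_closure] at hx1 ⊢
  exact ⟨subset_closure (mem_image_of_mem φ hx.2),
    closure_mono (compl_subset_compl.2 (h2.subset.trans inter_subset_left)) hx1.2⟩

/-- Near `φ x` the set `φ(F₁)` is covered by `φ(F₂)` by (F3), and `φ(F₂)` by `A` by the
hypothesis on `V`. -/
lemma preimage_mem_nhds_of_mem_inter [CompactSpace G] [T2Space F]
    (h : IsSimpleFold φ F1 F2 F3) {A V : Set G} (hV : IsOpen V)
    (hAV : frontier A ∩ frontier (φ '' F2) ⊆ V) (hVA : φ '' F2 ∩ V ⊆ A) {x : F}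
    (hx : x ∈ F1 ∩ F2) (hxA : φ x ∈ A) : φ ⁻¹' A ∈ 𝓝 x := by
  have hc3 := h.isClosed_pieces.2.2
  have hx2 := h.image_inter_subset_frontier (mem_image_of_mem φ hx)
  have hcov := h.mem_union
  obtain ⟨hφ, -, -, -, hun, h2, hsep, -, hfr1, -, h13⟩ := h
  by_cases hAx : A ∈ 𝓝 (φ x)
  · exact hφ.continuousAt hAx
  have hxV : φ x ∈ V :=
    hAV ⟨⟨subset_closure hxA, fun h => hAx (mem_interior_iff_mem_nhds.1 h)⟩, hx2⟩
  have hx3 : φ x ∈ closure (φ '' F3 \ φ '' F2) := by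
    have hx1 : φ x ∈ frontier (φ '' F1) := hfr1 ▸ mem_image_of_mem φ hx
    rw [frontier_eq_closure_inter_closure] at hx1
    have hsub : (φ '' F1)ᶜ ⊆ φ '' F3 \ φ '' F2 := fun z hz =>
      ⟨(hun.symm ▸ mem_univ z : z ∈ φ '' F1 ∪ φ '' F3).resolve_left hz,
        fun hz2 => hz (h2.subset hz2).1⟩
    exact closure_mono hsub hx1.2
  have hxsep : φ x ∉ closure (φ '' F1 \ φ '' F2) := fun h => hsep.subset ⟨h, hx3⟩
  filter_upwards [hφ.continuousAt ((isClosed_closure.isOpen_compl.inter hV).mem_nhds ⟨hxsep, hxV⟩),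
    hc3.isOpen_compl.mem_nhds fun h3 => h13.subset ⟨hx.1, h3⟩] with z ⟨hzsep, hzV⟩ hz3
  refine hVA ⟨?_, hzV⟩
  by_contra hz2
  refine hzsep (subset_closure ⟨?_, hz2⟩)
  rcases hcov z with (hz1 | hz2') | hz3'
  exacts [mem_image_of_mem φ hz1, absurd (mem_image_of_mem φ hz2') hz2, absurd hz3' hz3]

lemma preimage_mem_nhds [CompactSpace G] [T2Space F] (h : IsSimpleFold φ F1 F2 F3)
    {A V : Set G} (hV : IsOpen V) (hAV : frontier A ∩ frontier (φ '' F2) ⊆ V)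
    (hVA : φ '' F2 ∩ V ⊆ A) {x : F} (hx : x ∈ F1 ∩ F2 ∪ F2 ∩ F3) (hxA : φ x ∈ A) :
    φ ⁻¹' A ∈ 𝓝 x := by
  rcases hx with hx | ⟨hx2, hx3⟩
  · exact h.preimage_mem_nhds_of_mem_inter hV hAV hVA hx hxA
  · exact h.symm.preimage_mem_nhds_of_mem_inter hV hAV hVA ⟨hx3, hx2⟩ hxA

lemma exists_chart_of_mem_left [CompactSpace G] [T2Space F] (h : IsSimpleFold φ F1 F2 F3)
    {x : F} (hx1 : x ∈ F1) (hx2 : x ∉ F2) :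
    ∃ P ∈ 𝓝 x, φ '' P ∈ 𝓝 (φ x) ∧ IsEmbedding (P.domRestrict φ) := by
  obtain ⟨-, c2, c3⟩ := h.isClosed_pieces
  have hcov := h.mem_union
  obtain ⟨-, -, -, ⟨r1, -, -⟩, -, -, -, ⟨e1, -, -⟩, hfr1, -, h13⟩ := h
  refine ⟨F1, mem_of_superset ((c2.union c3).isOpen_compl.mem_nhds ?_) fun z hz => ?_, ?_, e1.2⟩
  · rintro (h2 | h3)
    exacts [hx2 h2, h13.subset ⟨hx1, h3⟩]
  · rcases hcov z with (hz1 | hz2) | hz3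
    exacts [hz1, absurd (Or.inl hz2) hz, absurd (Or.inr hz3) hz]
  · rw [← mem_interior_iff_mem_nhds]
    by_contra hint
    have hfr : φ x ∈ frontier (φ '' F1) := by
      rw [r1.1.frontier_eq]
      exact ⟨mem_image_of_mem φ hx1, hint⟩
    rw [hfr1] at hfr
    obtain ⟨w, ⟨hw1, hw2⟩, hwx⟩ := hfr
    exact hx2 (injOn_iff_injective.2 e1.2.injective hw1 hx1 hwx ▸ hw2)

lemma exists_chart_of_mem_middle [CompactSpace G] [T2Space F] (h : IsSimpleFold φ F1 F2 F3)
    {x : F} (hx1 : x ∉ F1) (hx2 : x ∈ F2) (hx3 : x ∉ F3) :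
    ∃ P ∈ 𝓝 x, φ '' P ∈ 𝓝 (φ x) ∧ IsEmbedding (P.domRestrict φ) := by
  obtain ⟨c1, -, c3⟩ := h.isClosed_pieces
  have hcov := h.mem_union
  obtain ⟨-, -, -, ⟨-, r2, -⟩, -, h2, -, ⟨-, e2, -⟩, hfr1, hfr3, -⟩ := h
  have hinj := injOn_iff_injective.2 e2.2.injective
  refine ⟨F2, mem_of_superset ((c1.union c3).isOpen_compl.mem_nhds ?_) fun z hz => ?_, ?_, e2.2⟩
  · rintro (h1 | h3)
    exacts [hx1 h1, hx3 h3]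
  · rcases hcov z with (hz1 | hz2) | hz3
    exacts [absurd (Or.inl hz1) hz, hz2, absurd (Or.inr hz3) hz]
  · rw [← mem_interior_iff_mem_nhds]
    by_contra hint
    have hfr : φ x ∈ frontier (φ '' F2) := by
      rw [r2.1.frontier_eq]
      exact ⟨mem_image_of_mem φ hx2, hint⟩
    rw [h2] at hfr
    rcases frontier_inter_subset _ _ hfr with ⟨hfr, -⟩ | ⟨-, hfr⟩
    · rw [hfr1] at hfr
      obtain ⟨w, ⟨hw1, hw2⟩, hwx⟩ := hfr
      exact hx1 (hinj hw2 hx2 hwx ▸ hw1)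
    · rw [hfr3] at hfr
      obtain ⟨w, ⟨hw2, hw3⟩, hwx⟩ := hfr
      exact hx3 (hinj hw2 hx2 hwx ▸ hw3)

/-- Off `F₁ ∩ F₂ ∪ F₂ ∩ F₃` the fold is a local homeomorphism. -/
lemma exists_chart [CompactSpace G] [T2Space F] (h : IsSimpleFold φ F1 F2 F3) {x : F}
    (hx : x ∉ F1 ∩ F2 ∪ F2 ∩ F3) :
    ∃ P ∈ 𝓝 x, φ '' P ∈ 𝓝 (φ x) ∧ IsEmbedding (P.domRestrict φ) := by
  rcases h.mem_union x with (hx1 | hx2) | hx3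
  · exact h.exists_chart_of_mem_left hx1 fun hx2 => hx (Or.inl ⟨hx1, hx2⟩)
  · exact h.exists_chart_of_mem_middle (fun hx1 => hx (Or.inl ⟨hx1, hx2⟩)) hx2
      fun hx3 => hx (Or.inr ⟨hx2, hx3⟩)
  · exact h.symm.exists_chart_of_mem_left hx3 fun hx2 => hx (Or.inr ⟨hx2, hx3⟩)

lemma connectedImKleinenAt_univ [CompactSpace G] [T2Space G] [T2Space F] (hG : IsGraphSpace G)
    (h : IsSimpleFold φ F1 F2 F3) {x : F} (hx : x ∈ F1 ∩ F2) :
    ConnectedImKleinenAt (univ : Set F) x := by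
  have hc3 := h.isClosed_pieces.2.2
  have hcov := h.mem_union
  obtain ⟨hφ, -, -, ⟨r1, r2, -⟩, -, -, -, ⟨e1, e2, -⟩, -, -, h13⟩ := h
  have hF1 := (hG.connectedImKleinenAt r1 (mem_image_of_mem φ hx.1)).of_isEmbedding hφ e1.2 hx.1
  have hF2 := (hG.connectedImKleinenAt r2 (mem_image_of_mem φ hx.2)).of_isEmbedding hφ e2.2 hx.2
  refine (hF1.union hF2 hx.1 hx.2).congr (eventuallyEq_univ.2 (mem_of_superset
    (hc3.isOpen_compl.mem_nhds fun h3 => h13.subset ⟨hx.1, h3⟩) fun z hz3 => ?_))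
  exact (hcov z).resolve_right hz3

lemma inter_subset_frontier [CompactSpace G] [T2Space G] [T2Space F] (hG : IsGraphSpace G)
    (h : IsSimpleFold φ F1 F2 F3) : F1 ∩ F2 ⊆ frontier F2 := by
  have hc2 := h.isClosed_pieces.2.1
  obtain ⟨hφ, -, -, ⟨r1, -, -⟩, -, -, -, ⟨e1, -, -⟩, hfr1, -, -⟩ := h
  intro x hx
  rw [hc2.frontier_eq]
  refine ⟨hx.2, fun hint => ?_⟩
  obtain ⟨T, hT, hTc, ⟨a, ha, b, hb, hab⟩, -⟩ :=
    (hG.connectedImKleinenAt r1 (mem_image_of_mem φ hx.1)).of_isEmbedding hφ e1.2 hx.1 _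
      (isOpen_interior.mem_nhds hint)
  have hφT : closure (φ '' T) ⊆ frontier (φ '' F1) := closure_minimal
    (hfr1 ▸ image_mono fun z hz => ⟨(hT hz).1, interior_subset (hT hz).2⟩) isClosed_frontier
  obtain ⟨y, hy⟩ := hG.nonempty_interior_closure (hTc.image φ hφ.continuousOn)
    ⟨φ a, mem_image_of_mem φ ha, φ b, mem_image_of_mem φ hb,
      fun e => hab (injOn_iff_injective.2 e1.2.injective (hT ha).1 (hT hb).1 e)⟩
  simpa [interior_frontier r1.1] using interior_mono hφT hy

lemma frontier_eq [CompactSpace G] [T2Space G] [T2Space F] (hG : IsGraphSpace G)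
    (h : IsSimpleFold φ F1 F2 F3) : frontier F2 = F1 ∩ F2 ∪ F2 ∩ F3 :=
  h.frontier_subset.antisymm <| union_subset (h.inter_subset_frontier hG)
    fun _ hx => h.symm.inter_subset_frontier hG ⟨hx.2, hx.1⟩

lemma mem_frontier_preimage_iff [CompactSpace G] [T2Space G] [T2Space F] (hG : IsGraphSpace G)
    (h : IsSimpleFold φ F1 F2 F3) {A V : Set G} (hA : IsClosed A) (hV : IsOpen V)
    (hAV : frontier A ∩ frontier (φ '' F2) ⊆ V) (hVA : φ '' F2 ∩ V ⊆ A) {x : F}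
    (hxA : φ x ∈ A) : x ∈ frontier (φ ⁻¹' A) ↔ φ x ∈ frontier A ∧ x ∉ frontier F2 := by
  rw [(hA.preimage h.continuous).frontier_eq, hA.frontier_eq, h.frontier_eq hG]
  simp only [Set.mem_sdiff, mem_preimage, mem_interior_iff_mem_nhds, hxA, true_and]
  by_cases hx : x ∈ F1 ∩ F2 ∪ F2 ∩ F3
  · simp [hx, h.preimage_mem_nhds hV hAV hVA hx hxA]
  · obtain ⟨P, hP, hφP, he⟩ := h.exists_chart hx
    rw [← Filter.mem_map, map_nhds_eq_of_isEmbedding_domRestrict hP hφP he]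
    simp [hx]

lemma connectedImKleinenAt_preimage [CompactSpace G] [T2Space G] [T2Space F]
    (hG : IsGraphSpace G) (h : IsSimpleFold φ F1 F2 F3) {A V : Set G} (hA : IsRegularSet A)
    (hV : IsOpen V) (hAV : frontier A ∩ frontier (φ '' F2) ⊆ V) (hVA : φ '' F2 ∩ V ⊆ A) {x : F}
    (hxA : φ x ∈ A) : ConnectedImKleinenAt (φ ⁻¹' A) x := by
  by_cases hx : x ∈ F1 ∩ F2 ∪ F2 ∩ F3
  · have hF : ConnectedImKleinenAt (univ : Set F) x := hx.elim (h.connectedImKleinenAt_univ hG)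
      fun hx => h.symm.connectedImKleinenAt_univ hG ⟨hx.2, hx.1⟩
    exact hF.congr (eventuallyEq_univ.2 (h.preimage_mem_nhds hV hAV hVA hx hxA)).symm
  · obtain ⟨P, hP, hφP, he⟩ := h.exists_chart hx
    exact (hG.connectedImKleinenAt hA hxA).preimage_of_mem_nhds h.continuous hP hφP he

end IsSimpleFold

end SimpleFold

section Straight

lemma image_fst_preimage_prodMap {F G : Type*} {φ : F → G} {S : Set (G × unitInterval)} :
    Prod.fst '' (Prod.map φ id ⁻¹' S) = φ ⁻¹' (Prod.fst '' S) := by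
  ext x
  simp

variable {F G : Type*} [TopologicalSpace F] [TopologicalSpace G] {φ : F → G}
  {S : Set (G × unitInterval)}

lemma IsStraight.preimage_prodMap (hS : IsStraight S) (hφ : Continuous φ)
    (hreg : IsRegularSet (φ ⁻¹' (Prod.fst '' S))) : IsStraight (Prod.map φ id ⁻¹' S) := by
  refine ⟨hS.1.preimage (hφ.prodMap continuous_id), ?_, image_fst_preimage_prodMap ▸ hreg⟩
  rintro ⟨x, t⟩ hxt ⟨x', t'⟩ hxt' hxx'
  obtain rfl : x = x' := hxx'
  simpa using hS.2.1 hxt hxt' rfl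

lemma endSet_preimage_prodMap {B : Set F} (h : ∀ x, φ x ∈ Prod.fst '' S →
      (x ∈ frontier (φ ⁻¹' (Prod.fst '' S)) ↔ φ x ∈ frontier (Prod.fst '' S) ∧ x ∉ B)) :
    endSet (Prod.map φ id ⁻¹' S) = Prod.map φ id ⁻¹' endSet S \ B ×ˢ univ := by
  ext ⟨x, t⟩
  simp only [endSet, image_fst_preimage_prodMap, mem_inter_iff, mem_preimage, Set.mem_sdiff,
    mem_prod, mem_univ, and_true, Prod.map_apply, id_eq]
  constructor
  · rintro ⟨hxt, hfr⟩
    exact ⟨⟨hxt, ((h x ⟨_, hxt, rfl⟩).1 hfr).1⟩, ((h x ⟨_, hxt, rfl⟩).1 hfr).2⟩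
  · rintro ⟨⟨hxt, hfr⟩, hB⟩
    exact ⟨hxt, (h x ⟨_, hxt, rfl⟩).2 ⟨hfr, hB⟩⟩

end Straight

theorem stmt14_general (F G : Type*) [TopologicalSpace F] [TopologicalSpace G]
    [CompactSpace F] [T2Space F] [CompactSpace G] [T2Space G]
    (hG : IsGraphSpace G)
    (φ : F → G) (F1 F2 F3 : Set F) (h : IsSimpleFold φ F1 F2 F3)
    (S : Set (G × unitInterval)) (hS : IsStraight S)
    (hyp : frontier (Prod.fst '' S) ∩ frontier (φ '' F2) = ∅ ∨
      ∃ V : Set G, IsOpen V ∧ frontier (Prod.fst '' S) ∩ frontier (φ '' F2) ⊆ V ∧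
        (φ '' F2) ∩ V ⊆ (Prod.fst '' S) ∩ V) :
    IsStraight (Prod.map φ id ⁻¹' S) ∧
    endSet (Prod.map φ id ⁻¹' S) =
      (Prod.map φ id ⁻¹' endSet S) \ (frontier F2 ×ˢ (Set.univ : Set unitInterval)) := by
  set A := Prod.fst '' S
  obtain ⟨V, hV, hAV, hVA⟩ :
      ∃ V : Set G, IsOpen V ∧ frontier A ∩ frontier (φ '' F2) ⊆ V ∧ φ '' F2 ∩ V ⊆ A := by
    rcases hyp with hyp | ⟨V, hV, hAV, hVA⟩
    · exact ⟨∅, isOpen_empty, hyp.subset, by simp⟩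
    · exact ⟨V, hV, hAV, fun z hz => (hVA hz).1⟩
  have hA : IsRegularSet A := hS.2.2
  have hreg : IsRegularSet (φ ⁻¹' A) :=
    isRegularSet_of_forall_connectedImKleinenAt (hA.1.preimage h.continuous)
      (hA.1.preimage h.continuous).isCompact
      fun x hx => h.connectedImKleinenAt_preimage hG hA hV hAV hVA hx
  exact ⟨hS.preimage_prodMap h.continuous hreg, endSet_preimage_prodMap
    fun x hx => h.mem_frontier_preimage_iff hG hA.1 hV hAV hVA hx⟩

/-- preimages of straight sets under simple folds are straight, with the
stated end set. -/
theorem stmt14 (F G : Type*) [TopologicalSpace F] [TopologicalSpace G]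
    [CompactSpace F] [T2Space F] [CompactSpace G] [T2Space G]
    (hF : IsGraphSpace F) (hG : IsGraphSpace G)
    (φ : F → G) (F1 F2 F3 : Set F) (h : IsSimpleFold φ F1 F2 F3)
    (S : Set (G × unitInterval)) (hS : IsStraight S)
    (hyp : frontier (Prod.fst '' S) ∩ frontier (φ '' F2) = ∅ ∨
      ∃ V : Set G, IsOpen V ∧ frontier (Prod.fst '' S) ∩ frontier (φ '' F2) ⊆ V ∧
        (φ '' F2) ∩ V ⊆ (Prod.fst '' S) ∩ V) :
    IsStraight (Prod.map φ id ⁻¹' S) ∧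
    endSet (Prod.map φ id ⁻¹' S) =
      (Prod.map φ id ⁻¹' endSet S) \ (frontier F2 ×ˢ (Set.univ : Set unitInterval)) :=
  stmt14_general F G hG φ F1 F2 F3 h S hS hyp
end

section
/- Let X be a hereditarily indecomposable compactum, A, B disjoint closed subsets of X, and U ⊇ A, V ⊇ B open. Then there exist closed sets X₁, X₂, X₃ ⊆ X with X = X₁ ∪ X₂ ∪ X₃, A ⊆ X₁, B ⊆ X₃, X₁ ∩ X₂ ⊆ V, X₂ ∩ X₃ ⊆ U, and X₁ ∩ X₃ = ∅. Conversely, if a compactum X has this decomposition property for all such A, B, U, V, then X is hereditarily indecomposable. -/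
open Set Topology

private lemma clopen_sep {Y : Type*} [TopologicalSpace Y] [CompactSpace Y] [T2Space Y]
    (z : Y) {C : Set Y} (hC : IsClosed C) (h : connectedComponent z ∩ C = ∅) :
    ∃ O : Set Y, IsClopen O ∧ z ∈ O ∧ O ∩ C = ∅ := by
  have hcc := connectedComponent_eq_iInter_isClopen z
  have hdis : (C ∩ ⋂ s : { s : Set Y // IsClopen s ∧ z ∈ s }, (s : Set Y)) = ∅ := by
    rw [← hcc, inter_comm]; exact h
  obtain ⟨t, ht⟩ := hC.isCompact.elim_finite_subfamily_closed _
      (fun s : { s : Set Y // IsClopen s ∧ z ∈ s } => s.2.1.isClosed) hdis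
  refine ⟨⋂ s ∈ t, (s : Set Y), isClopen_biInter_finset (fun s _ => s.2.1), ?_, ?_⟩
  · exact mem_iInter₂.2 fun s _ => s.2.2
  · rw [inter_comm]; exact ht

private lemma hi_comp {X : Type*} [TopologicalSpace X] (hX : HereditarilyIndecomposable X)
    {K L : Set X} (hKc : IsCompact K) (hK : IsPreconnected K)
    (hLc : IsCompact L) (hL : IsPreconnected L) {z : X} (hzK : z ∈ K) (hzL : z ∈ L) :
    K ⊆ L ∨ L ⊆ K := by
  by_contra h
  push_neg at h
  obtain ⟨hKL, hLK⟩ := h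
  obtain ⟨k, hkK, hkL⟩ := not_subset.mp hKL
  obtain ⟨l, hlL, hlK⟩ := not_subset.mp hLK
  refine hX (K ∪ L) (hKc.union hLc) ⟨⟨z, Or.inl hzK⟩, IsPreconnected.union z hzK hzL hK hL⟩
    ⟨k, Or.inl hkK, l, Or.inr hlL, ?_⟩
    ⟨K, L, hKc, ⟨⟨z, hzK⟩, hK⟩, hLc, ⟨⟨z, hzL⟩, hL⟩, rfl, ?_, ?_⟩
  · rintro rfl; exact hkL hlL
  · intro hb; apply hLK; rw [hb]; exact subset_union_right
  · intro hb; apply hKL; rw [hb]; exact subset_union_left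

private lemma compIn_compact {X : Type*} [TopologicalSpace X] [CompactSpace X] [T2Space X]
    {S : Set X} (hS : IsClosed S) (z : X) : IsCompact (connectedComponentIn S z) := by
  by_cases hz : z ∈ S
  · haveI : CompactSpace S := isCompact_iff_compactSpace.mp hS.isCompact
    rw [connectedComponentIn_eq_image hz]
    exact (isClosed_connectedComponent.isCompact).image continuous_subtype_val
  · rw [connectedComponentIn_eq_empty hz]; exact isCompact_empty

private lemma trap {X : Type*} [TopologicalSpace X] [CompactSpace X] [T2Space X]
    {F A C : Set X} (hF : IsClosed F) (hAc : IsClosed A) (hC : IsClosed C) (hA : A ⊆ F)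
    (h : ∀ z ∈ C ∩ F, connectedComponentIn F z ∩ A = ∅) :
    ∃ P W : Set X, IsOpen W ∧ P = F ∩ W ∧ IsClosed P ∧ A ⊆ P ∧ P ∩ C = ∅ := by
  haveI : CompactSpace F := isCompact_iff_compactSpace.mp hF.isCompact
  set Asub : Set F := Subtype.val ⁻¹' A with hAsubdef
  set Csub : Set F := Subtype.val ⁻¹' C with hCsubdef
  have hAsubc : IsClosed Asub := hAc.preimage continuous_subtype_val
  have hCsubc : IsCompact Csub := ((hC.preimage continuous_subtype_val)).isCompact
  have hcomp : ∀ w : Csub, connectedComponent (w : F) ∩ Asub = ∅ := by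
    intro w
    have hz0 := h ((w : F) : X) ⟨w.2, (w : F).2⟩
    rw [eq_empty_iff_forall_notMem]
    rintro u ⟨hu1, hu2⟩
    have : (u : X) ∈ connectedComponentIn F ((w : F) : X) ∩ A := by
      rw [connectedComponentIn_eq_image (w : F).2]
      exact ⟨⟨u, hu1, rfl⟩, hu2⟩
    rw [hz0] at this
    exact this
  choose O hO1 hO2 hO3 using fun w : Csub => clopen_sep (w : F) hAsubc (hcomp w)
  have hcov : Csub ⊆ ⋃ w : Csub, O w := fun z hz => mem_iUnion.2 ⟨⟨z, hz⟩, hO2 ⟨z, hz⟩⟩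
  obtain ⟨t, ht⟩ := hCsubc.elim_finite_subcover O (fun w => (hO1 w).isOpen) hcov
  set Psub : Set F := (⋃ w ∈ t, O w)ᶜ with hPsubdef
  have hPsubclopen : IsClopen Psub := (isClopen_biUnion_finset (fun w _ => hO1 w)).compl
  have hAPsub : Asub ⊆ Psub := by
    intro a ha
    simp only [hPsubdef, mem_compl_iff, mem_iUnion]
    rintro ⟨w, hw, haw⟩
    have h3 := hO3 w
    rw [eq_empty_iff_forall_notMem] at h3
    exact h3 a ⟨haw, ha⟩
  have hPCsub : Psub ∩ Csub = ∅ := by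
    rw [eq_empty_iff_forall_notMem]
    rintro z ⟨hz1, hz2⟩
    exact hz1 (ht hz2)
  obtain ⟨W, hW, hWeq⟩ := isOpen_induced_iff.mp hPsubclopen.isOpen
  refine ⟨Subtype.val '' Psub, W, hW, ?_, ?_, ?_, ?_⟩
  · rw [← hWeq, Set.image_preimage_eq_inter_range, Subtype.range_coe, inter_comm]
  · exact (hPsubclopen.isClosed.isCompact.image continuous_subtype_val).isClosed
  · intro a ha
    exact ⟨⟨a, hA ha⟩, hAPsub ha, rfl⟩
  · rw [eq_empty_iff_forall_notMem]
    rintro x ⟨⟨w, hw, rfl⟩, hxC⟩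
    rw [eq_empty_iff_forall_notMem] at hPCsub
    exact hPCsub w ⟨hw, hxC⟩

/-- the Krasinkiewicz–Minc characterization of hereditarily indecomposable
compacta. -/
theorem stmt18 (X : Type*) [MetricSpace X] [CompactSpace X] :
    HereditarilyIndecomposable X ↔
    ∀ A B U V : Set X, IsClosed A → IsClosed B → A ∩ B = ∅ →
      IsOpen U → IsOpen V → A ⊆ U → B ⊆ V →
      ∃ X1 X2 X3 : Set X, IsClosed X1 ∧ IsClosed X2 ∧ IsClosed X3 ∧
        X1 ∪ X2 ∪ X3 = Set.univ ∧ A ⊆ X1 ∧ B ⊆ X3 ∧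
        X1 ∩ X2 ⊆ V ∧ X2 ∩ X3 ⊆ U ∧ X1 ∩ X3 = ∅ := by
  constructor
  · -- forward direction
    intro hX A B U V hA hB hAB hU hV hAU hBV
    obtain ⟨U₁, V₁, hU₁, hV₁, hAU₁, hBV₁, hd⟩ :=
      normal_separation hA hB (disjoint_iff_inter_eq_empty.mpr hAB)
    obtain ⟨U₀, hU₀, hAU₀, hclU₀⟩ :=
      normal_exists_closure_subset hA (hU.inter hU₁) (subset_inter hAU hAU₁)
    obtain ⟨V₀, hV₀, hBV₀, hclV₀⟩ :=
      normal_exists_closure_subset hB (hV.inter hV₁) (subset_inter hBV hBV₁)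
    set F : Set X := V₀ᶜ with hFdef
    set G : Set X := U₀ᶜ with hGdef
    have hF : IsClosed F := hV₀.isClosed_compl
    have hG : IsClosed G := hU₀.isClosed_compl
    have hAF : A ⊆ F := by
      intro a ha hav
      exact Set.disjoint_left.mp hd (hAU₁ ha) (hclV₀ (subset_closure hav)).2
    have hBG : B ⊆ G := by
      intro b hb hbu
      exact Set.disjoint_left.mp hd (hclU₀ (subset_closure hbu)).2 (hBV₁ hb)
    haveI : CompactSpace G := isCompact_iff_compactSpace.mp hG.isCompact
    set Bsub : Set G := Subtype.val ⁻¹' B with hBsubdef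
    have hBsubc : IsClosed Bsub := hB.preimage continuous_subtype_val
    set Y3sub : Set G := {w : G | (connectedComponent w ∩ Bsub).Nonempty} with hY3subdef
    have hY3subclosed : IsClosed Y3sub := by
      rw [← isOpen_compl_iff, isOpen_iff_forall_mem_open]
      intro w hw
      have hw' : connectedComponent w ∩ Bsub = ∅ :=
        not_nonempty_iff_eq_empty.mp hw
      obtain ⟨O, hO1, hO2, hO3⟩ := clopen_sep w hBsubc hw'
      refine ⟨O, ?_, hO1.isOpen, hO2⟩
      intro u hu hu'
      obtain ⟨b, hb1, hb2⟩ := hu'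
      have hbO : b ∈ O := (hO1.connectedComponent_subset hu) hb1
      rw [eq_empty_iff_forall_notMem] at hO3
      exact hO3 b ⟨hbO, hb2⟩
    set Y3 : Set X := Subtype.val '' Y3sub with hY3def
    have hY3closed : IsClosed Y3 :=
      (hY3subclosed.isCompact.image continuous_subtype_val).isClosed
    have hY3G : Y3 ⊆ G := by rintro x ⟨w, _, rfl⟩; exact w.2
    -- key step using hereditary indecomposability
    have hkey : ∀ z ∈ Y3 ∩ F, connectedComponentIn F z ∩ A = ∅ := by
      rintro z ⟨hzY3, hzF⟩
      obtain ⟨w, hwY3, rfl⟩ := hzY3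
      by_contra hne
      obtain ⟨a, haK, haA⟩ := nonempty_iff_ne_empty.mpr hne
      have hKc : IsCompact (connectedComponentIn F (w : X)) := compIn_compact hF _
      have hLc : IsCompact (connectedComponentIn G (w : X)) := compIn_compact hG _
      have hzK : (w : X) ∈ connectedComponentIn F (w : X) := mem_connectedComponentIn hzF
      have hzL : (w : X) ∈ connectedComponentIn G (w : X) := mem_connectedComponentIn w.2
      have hLB : (connectedComponentIn G (w : X) ∩ B).Nonempty := by
        obtain ⟨b, hb1, hb2⟩ := hwY3
        refine ⟨(b : X), ?_, hb2⟩
        rw [connectedComponentIn_eq_image w.2]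
        exact ⟨b, hb1, rfl⟩
      rcases hi_comp hX hKc isPreconnected_connectedComponentIn hLc
        isPreconnected_connectedComponentIn hzK hzL with hKL | hLK
      · exact (connectedComponentIn_subset G (w : X) (hKL haK)) (hAU₀ haA)
      · obtain ⟨b, hbL, hbB⟩ := hLB
        exact (connectedComponentIn_subset F (w : X) (hLK hbL)) (hBV₀ hbB)
    obtain ⟨P, W, hWopen, hPFW, hPclosed, hAP, hPY3⟩ := trap hF hA hY3closed hAF hkey
    -- second application: build Q avoiding P
    have hkey2 : ∀ z ∈ P ∩ G, connectedComponentIn G z ∩ B = ∅ := by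
      rintro z ⟨hzP, hzG⟩
      by_contra hne
      obtain ⟨b, hbL, hbB⟩ := nonempty_iff_ne_empty.mpr hne
      rw [connectedComponentIn_eq_image hzG] at hbL
      obtain ⟨b', hb', rfl⟩ := hbL
      have hzY3 : z ∈ Y3 := ⟨⟨z, hzG⟩, ⟨b', hb', hbB⟩, rfl⟩
      rw [eq_empty_iff_forall_notMem] at hPY3
      exact hPY3 z ⟨hzP, hzY3⟩
    obtain ⟨Q, W', hW'open, hQGW, hQclosed, hBQ, hQP⟩ := trap hG hB hPclosed hBG hkey2
    refine ⟨P, closure (P ∪ Q)ᶜ, Q, hPclosed, isClosed_closure, hQclosed, ?_, hAP, hBQ,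
      ?_, ?_, ?_⟩
    · apply eq_univ_of_forall
      intro x
      by_cases hx : x ∈ P ∪ Q
      · rcases hx with hx | hx
        · exact Or.inl (Or.inl hx)
        · exact Or.inr hx
      · exact Or.inl (Or.inr (subset_closure hx))
    · -- X1 ∩ X2 ⊆ V
      rintro x ⟨hxP, hxcl⟩
      by_contra hxV
      have hxv₀ : x ∉ closure V₀ := fun h => hxV (hclV₀ h).1
      have hxW : x ∈ W := by rw [hPFW] at hxP; exact hxP.2
      obtain ⟨y, ⟨hyW, hyv₀⟩, hy2⟩ :=
        mem_closure_iff.mp hxcl (W ∩ (closure V₀)ᶜ) (hWopen.inter isClosed_closure.isOpen_compl)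
          ⟨hxW, hxv₀⟩
      apply hy2
      left
      rw [hPFW]
      exact ⟨fun h => hyv₀ (subset_closure h), hyW⟩
    · -- X2 ∩ X3 ⊆ U
      rintro x ⟨hxcl, hxQ⟩
      by_contra hxU
      have hxu₀ : x ∉ closure U₀ := fun h => hxU (hclU₀ h).1
      have hxW : x ∈ W' := by rw [hQGW] at hxQ; exact hxQ.2
      obtain ⟨y, ⟨hyW, hyu₀⟩, hy2⟩ :=
        mem_closure_iff.mp hxcl (W' ∩ (closure U₀)ᶜ) (hW'open.inter isClosed_closure.isOpen_compl)
          ⟨hxW, hxu₀⟩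
      apply hy2
      right
      rw [hQGW]
      exact ⟨fun h => hyu₀ (subset_closure h), hyW⟩
    · rw [inter_comm]; exact hQP
  · -- converse direction
    intro hP K hKcomp hKconn hKnt
    rintro ⟨Aa, Bb, hAc, hAconn, hBc, hBconn, hunion, hAne, hBne⟩
    have hKA : Aa ⊆ K := by rw [← hunion]; exact subset_union_left
    have hKB : Bb ⊆ K := by rw [← hunion]; exact subset_union_right
    obtain ⟨a, haK, haB⟩ : ∃ a ∈ K, a ∉ Bb := by
      by_contra h
      push_neg at h
      exact hBne (hKB.antisymm h)
    obtain ⟨b, hbK, hbA⟩ : ∃ b ∈ K, b ∉ Aa := by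
      by_contra h
      push_neg at h
      exact hAne (hKA.antisymm h)
    have haA : a ∈ Aa := by
      rw [← hunion] at haK
      exact haK.resolve_right haB
    have hbB : b ∈ Bb := by
      rw [← hunion] at hbK
      exact hbK.resolve_left hbA
    have hab : ({a} : Set X) ∩ {b} = ∅ := by
      rw [eq_empty_iff_forall_notMem]
      rintro x ⟨hx1, hx2⟩
      rw [mem_singleton_iff] at hx1 hx2
      subst hx1; subst hx2
      exact haB hbB
    obtain ⟨X1, X2, X3, hX1, hX2, hX3, hcover, haX1, hbX3, h12, h23, h13⟩ :=
      hP {a} {b} Bbᶜ Aaᶜ isClosed_singleton isClosed_singleton hab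
        hBc.isClosed.isOpen_compl hAc.isClosed.isOpen_compl
        (singleton_subset_iff.mpr haB) (singleton_subset_iff.mpr hbA)
    have haX1' : a ∈ X1 := singleton_subset_iff.mp haX1
    have hbX3' : b ∈ X3 := singleton_subset_iff.mp hbX3
    rw [eq_empty_iff_forall_notMem] at h13
    -- Aa ⊆ X1
    have hAX1 : Aa ⊆ X1 := by
      by_contra hcon
      obtain ⟨x, hxA, hxX1⟩ := not_subset.mp hcon
      have hpre := hAconn.2 (X2 ∪ X3)ᶜ X1ᶜ (hX2.union hX3).isOpen_compl hX1.isOpen_compl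
        ?_ ⟨a, haA, ?_⟩ ⟨x, hxA, hxX1⟩
      · obtain ⟨y, _, hy1, hy2⟩ := hpre
        have : y ∈ X1 ∪ X2 ∪ X3 := by rw [hcover]; trivial
        rcases this with (h | h) | h
        · exact hy2 h
        · exact hy1 (Or.inl h)
        · exact hy1 (Or.inr h)
      · intro y hyA
        by_cases hy : y ∈ X1
        · left
          rintro (h | h)
          · exact h12 ⟨hy, h⟩ hyA
          · exact h13 y ⟨hy, h⟩
        · right; exact hy
      · rintro (h | h)
        · exact h12 ⟨haX1', h⟩ haA
        · exact h13 a ⟨haX1', h⟩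
    -- Bb ⊆ X3
    have hBX3 : Bb ⊆ X3 := by
      by_contra hcon
      obtain ⟨x, hxB, hxX3⟩ := not_subset.mp hcon
      have hpre := hBconn.2 (X1 ∪ X2)ᶜ X3ᶜ (hX1.union hX2).isOpen_compl hX3.isOpen_compl
        ?_ ⟨b, hbB, ?_⟩ ⟨x, hxB, hxX3⟩
      · obtain ⟨y, _, hy1, hy2⟩ := hpre
        have : y ∈ X1 ∪ X2 ∪ X3 := by rw [hcover]; trivial
        rcases this with (h | h) | h
        · exact hy1 (Or.inl h)
        · exact hy1 (Or.inr h)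
        · exact hy2 h
      · intro y hyB
        by_cases hy : y ∈ X3
        · left
          rintro (h | h)
          · exact h13 y ⟨h, hy⟩
          · exact h23 ⟨h, hy⟩ hyB
        · right; exact hy
      · rintro (h | h)
        · exact h13 b ⟨h, hbX3'⟩
        · exact h23 ⟨h, hbX3'⟩ hbB
    -- contradiction with connectedness of K
    have hpre := hKconn.2 X3ᶜ X1ᶜ hX3.isOpen_compl hX1.isOpen_compl
      ?_ ⟨a, haK, fun h => h13 a ⟨haX1', h⟩⟩ ⟨b, hbK, fun h => h13 b ⟨h, hbX3'⟩⟩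
    · obtain ⟨y, hyK, hy3, hy1⟩ := hpre
      rw [← hunion] at hyK
      rcases hyK with h | h
      · exact hy1 (hAX1 h)
      · exact hy3 (hBX3 h)
    · intro y hyK
      rw [← hunion] at hyK
      rcases hyK with h | h
      · exact Or.inl (fun h3 => h13 y ⟨hAX1 h, h3⟩)
      · exact Or.inr (fun h1 => h13 y ⟨h1, hBX3 h⟩)
end
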